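/- arXiv:2404.06995 — 9 statements merged into one kernel-verified Lean document; each statement's English description precedes it below -/
import Mathlib

section
/- Let P_X and P_Y be probability measures on a common measurable space (E, ℰ) with P_Y absolutely continuous with respect to P_X, and suppose the Radon–Nikodym derivative L := dP_Y/dP_X has a continuous (atomless) distribution under P_X. Let Z_X ~ P_X and Z_Y ~ P_Y be independent random elements. Then (1/2)·d_tv(P_X, P_Y) ≤ P( L(Z_X) < L(Z_Y) ) − 1/2 ≤ d_tv(P_X, P_Y). -/
/-!
Let `X, X'` be independent with law `P_X`. Since `P_Y = L • P_X`,
`P(L(Z_X) < L(Z_Y)) = E[L(X') ; L(X) < L(X')]`; exchanging `X` and `X'` and using that ties are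
null (the atomless hypothesis) gives `2 P(L(Z_X) < L(Z_Y)) - 1 = E[(L(X') - L(X))⁺]`.
On the other hand `d_tv = E(L - 1)⁺ = E(L - 1)⁻` because `E L = 1`. Jensen in `X'` gives
`E(L - 1)⁻ ≤ E[(L(X') - L(X))⁺]`, and `(b - a)⁺ ≤ (b - 1)⁺ + (a - 1)⁻` gives
`E[(L(X') - L(X))⁺] ≤ 2 d_tv`.
-/

open MeasureTheory ProbabilityTheory

noncomputable def tvDist {E : Type*} [MeasurableSpace E] (PX PY : Measure E) : ℝ :=
  ⨆ A : {s : Set E // MeasurableSet s}, |(PY A.1).toReal - (PX A.1).toReal|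

section PosPart

variable {α : Type*} [MeasurableSpace α] {μ : Measure α} {f g : α → ℝ}

theorem MeasureTheory.Integrable.posPart (hf : Integrable f μ) :
    Integrable (fun x ↦ (f x)⁺) μ :=
  hf.pos_part

theorem MeasureTheory.Integrable.negPart (hf : Integrable f μ) :
    Integrable (fun x ↦ (f x)⁻) μ :=
  hf.neg.pos_part

theorem setIntegral_pos_eq_integral_posPart (hf : AEMeasurable f μ) :
    ∫ x in {x | 0 < f x}, f x ∂μ = ∫ x, (f x)⁺ ∂μ := by
  rw [← integral_indicator₀ (nullMeasurableSet_lt aemeasurable_const hf)]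
  congr 1 with x
  by_cases hx : 0 < f x
  · simp [hx, hx.le]
  · simp [hx, not_lt.1 hx]

theorem setIntegral_lt_sub_setIntegral_lt (hf : Integrable f μ) (hg : Integrable g μ) :
    ∫ x in {x | f x < g x}, g x ∂μ - ∫ x in {x | f x < g x}, f x ∂μ =
      ∫ x, (g x - f x)⁺ ∂μ := by
  have hset : {x | f x < g x} = {x | 0 < g x - f x} := by ext; simp [sub_pos]
  rw [← integral_sub hg.integrableOn hf.integrableOn, hset]
  exact setIntegral_pos_eq_integral_posPart (hg.sub hf).aemeasurable

theorem integral_posPart_sub_eq_integral_negPart_sub [IsProbabilityMeasure μ]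
    (hf : Integrable f μ) :
    ∫ x, (f x - ∫ y, f y ∂μ)⁺ ∂μ = ∫ x, (f x - ∫ y, f y ∂μ)⁻ ∂μ := by
  have hint : Integrable (fun x ↦ f x - ∫ y, f y ∂μ) μ := hf.sub (integrable_const _)
  rw [← sub_eq_zero, ← integral_sub hint.posPart hint.negPart]
  simp_rw [posPart_sub_negPart]
  simp [integral_sub hf (integrable_const _)]

theorem setIntegral_le_integral_posPart (hf : Integrable f μ) (s : Set α) :
    ∫ x in s, f x ∂μ ≤ ∫ x, (f x)⁺ ∂μ :=
  (setIntegral_mono hf.integrableOn hf.posPart.integrableOn fun x ↦ le_posPart (f x)).trans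
    (setIntegral_le_integral hf.posPart (.of_forall fun x ↦ posPart_nonneg (f x)))

end PosPart

theorem tvDist_eq_integral_posPart_rnDeriv_sub_one {α : Type*} [MeasurableSpace α]
    (μ ν : Measure α) [IsProbabilityMeasure μ] [IsProbabilityMeasure ν] (hνμ : ν ≪ μ) :
    tvDist μ ν = ∫ x, ((ν.rnDeriv μ x).toReal - 1)⁺ ∂μ := by
  set L : α → ℝ := fun x ↦ (ν.rnDeriv μ x).toReal
  have hL : Integrable L μ := Measure.integrable_toReal_rnDeriv
  have hL1 : ∫ x, L x ∂μ = 1 := by simp [L, Measure.integral_toReal_rnDeriv hνμ]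
  have hL' : Integrable (fun x ↦ L x - 1) μ := hL.sub (integrable_const 1)
  have hdiff (s : Set α) : (ν s).toReal - (μ s).toReal = ∫ x in s, (L x - 1) ∂μ := by
    rw [integral_sub hL.integrableOn (integrableOn_const (measure_ne_top _ _)),
      Measure.setIntegral_toReal_rnDeriv hνμ s]
    simp [Measure.real]
  have hbound (s : Set α) : |(ν s).toReal - (μ s).toReal| ≤ ∫ x, (L x - 1)⁺ ∂μ := by
    have hsymm := integral_posPart_sub_eq_integral_negPart_sub hL
    rw [hL1] at hsymm
    rw [abs_le, hdiff]
    refine ⟨?_, setIntegral_le_integral_posPart hL' s⟩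
    rw [hsymm, neg_le, ← integral_neg]
    exact setIntegral_le_integral_posPart hL'.neg s
  refine le_antisymm (ciSup_le fun A ↦ hbound A.1) ?_
  set A := {x | 0 < L x - 1}
  have hA : MeasurableSet A :=
    measurableSet_lt measurable_const
      ((Measure.measurable_rnDeriv ν μ).ennreal_toReal.sub_const 1)
  calc ∫ x, (L x - 1)⁺ ∂μ = |(ν A).toReal - (μ A).toReal| := by
        rw [hdiff, setIntegral_pos_eq_integral_posPart hL'.aemeasurable,
          abs_of_nonneg (integral_nonneg fun x ↦ posPart_nonneg _)]
    _ ≤ tvDist μ ν :=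
        le_ciSup ⟨_, Set.forall_mem_range.2 fun A : {s // MeasurableSet s} ↦ hbound A.1⟩
          ⟨A, hA⟩

section Prod

variable {α β : Type*} [MeasurableSpace α] [MeasurableSpace β]

theorem prod_apply_toReal_eq_setIntegral_rnDeriv (κ : Measure β) [SFinite κ]
    (μ ν : Measure α) [SigmaFinite μ] [SigmaFinite ν] (hνμ : ν ≪ μ) {S : Set (β × α)}
    (hS : MeasurableSet S) :
    ((κ.prod ν) S).toReal = ∫ p in S, (ν.rnDeriv μ p.2).toReal ∂(κ.prod μ) := by
  have hdens : κ.prod ν = (κ.prod μ).withDensity fun p ↦ ν.rnDeriv μ p.2 := by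
    conv_lhs => rw [← Measure.withDensity_rnDeriv_eq ν μ hνμ]
    exact prod_withDensity_right (Measure.measurable_rnDeriv ν μ)
  rw [hdens, withDensity_apply _ hS, integral_toReal]
  · exact ((Measure.measurable_rnDeriv ν μ).comp measurable_snd).aemeasurable
  · exact ae_restrict_of_ae
      (Measure.quasiMeasurePreserving_snd.ae (Measure.rnDeriv_lt_top ν μ))

theorem measure_prod_setOf_eq_eq_zero (μ : Measure β) (ν : Measure α)
    {f : β → ℝ} {g : α → ℝ} (hf : Measurable f) (hg : Measurable g)
    (hν : ∀ c, ν {y | g y = c} = 0) : (μ.prod ν) {p | f p.1 = g p.2} = 0 := by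
  refine Measure.measure_prod_null_of_ae_null
    (measurableSet_eq_fun (hf.comp measurable_fst) (hg.comp measurable_snd))
    (.of_forall fun x ↦ ?_)
  simpa [eq_comm] using hν (f x)

end Prod

section IndependentCopies

variable {α : Type*} [MeasurableSpace α] {μ : Measure α} [IsProbabilityMeasure μ]
  {f : α → ℝ}

theorem setIntegral_lt_snd_add_setIntegral_lt_fst (hf : Integrable f μ) (hfm : Measurable f)
    (hμ : ∀ c, μ {x | f x = c} = 0) :
    ∫ p in {p : α × α | f p.1 < f p.2}, f p.2 ∂(μ.prod μ) +
      ∫ p in {p : α × α | f p.1 < f p.2}, f p.1 ∂(μ.prod μ) = ∫ x, f x ∂μ := by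
  have hswap : ∫ p in {p : α × α | f p.1 < f p.2}, f p.1 ∂(μ.prod μ) =
      ∫ p in {p : α × α | f p.2 < f p.1}, f p.2 ∂(μ.prod μ) :=
    (Measure.measurePreserving_swap.setIntegral_preimage_emb
      MeasurableEquiv.prodComm.measurableEmbedding (fun p ↦ f p.1) _).symm
  have hf₂ : Integrable (fun p : α × α ↦ f p.2) (μ.prod μ) := hf.comp_snd μ
  have hties : ∀ᵐ p ∂(μ.prod μ), f p.1 ≠ f p.2 :=
    ae_iff.2 (by simpa only [ne_eq, not_not] using measure_prod_setOf_eq_eq_zero μ μ hfm hfm hμ)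
  rw [hswap, ← setIntegral_union (s := {p : α × α | f p.1 < f p.2}) (t := {p | f p.2 < f p.1})
    (Set.disjoint_left.2 fun _ h₁ (h₂ : f _ < f _) ↦ lt_asymm h₁ h₂)
    (measurableSet_lt (hfm.comp measurable_snd) (hfm.comp measurable_fst))
    hf₂.integrableOn hf₂.integrableOn, setIntegral_eq_integral_of_ae_compl_eq_zero]
  · simp [integral_fun_snd]
  · filter_upwards [hties] with p hp hpS
    exact absurd (lt_or_gt_of_ne hp) hpS

theorem two_mul_setIntegral_lt_snd_sub_integral (hf : Integrable f μ) (hfm : Measurable f)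
    (hμ : ∀ c, μ {x | f x = c} = 0) :
    2 * ∫ p in {p : α × α | f p.1 < f p.2}, f p.2 ∂(μ.prod μ) - ∫ x, f x ∂μ =
      ∫ p, (f p.2 - f p.1)⁺ ∂(μ.prod μ) := by
  linarith [setIntegral_lt_snd_add_setIntegral_lt_fst hf hfm hμ,
    setIntegral_lt_sub_setIntegral_lt (μ := μ.prod μ) (hf.comp_fst μ) (hf.comp_snd μ)]

theorem integral_negPart_sub_integral_le_integral_prod (hf : Integrable f μ) :
    ∫ x, (f x - ∫ y, f y ∂μ)⁻ ∂μ ≤ ∫ p, (f p.2 - f p.1)⁺ ∂(μ.prod μ) := by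
  have hint : Integrable (fun p : α × α ↦ (f p.2 - f p.1)⁺) (μ.prod μ) :=
    ((hf.comp_snd μ).sub (hf.comp_fst μ)).posPart
  rw [integral_prod _ hint]
  refine integral_mono (hf.sub (integrable_const _)).negPart hint.integral_prod_left
    fun x ↦ sup_le ?_ (integral_nonneg fun y ↦ posPart_nonneg _)
  calc -(f x - ∫ y, f y ∂μ) = ∫ y, (f y - f x) ∂μ := by
        simp [integral_sub hf (integrable_const (f x))]
    _ ≤ ∫ y, (f y - f x)⁺ ∂μ :=
        integral_mono (hf.sub (integrable_const _)) (hf.sub (integrable_const _)).posPart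
          fun y ↦ le_posPart _

theorem integral_prod_posPart_sub_le (hf : Integrable f μ) :
    ∫ p, (f p.2 - f p.1)⁺ ∂(μ.prod μ) ≤
      ∫ x, (f x - ∫ y, f y ∂μ)⁺ ∂μ + ∫ x, (f x - ∫ y, f y ∂μ)⁻ ∂μ := by
  set m := ∫ y, f y ∂μ
  have hf' : Integrable (fun x ↦ f x - m) μ := hf.sub (integrable_const m)
  have hsplit (a b : ℝ) : (a - b)⁺ ≤ (a - m)⁺ + (b - m)⁻ :=
    sup_le (by linarith [le_posPart (a - m), neg_le_negPart (b - m)])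
      (add_nonneg (posPart_nonneg _) (negPart_nonneg _))
  calc ∫ p, (f p.2 - f p.1)⁺ ∂(μ.prod μ)
      ≤ ∫ p, ((f p.2 - m)⁺ + (f p.1 - m)⁻) ∂(μ.prod μ) :=
        integral_mono ((hf.comp_snd μ).sub (hf.comp_fst μ)).posPart
          ((hf'.posPart.comp_snd μ).add (hf'.negPart.comp_fst μ)) fun p ↦ hsplit _ _
    _ = ∫ x, (f x - m)⁺ ∂μ + ∫ x, (f x - m)⁻ ∂μ := by
        rw [integral_add (hf'.posPart.comp_snd μ) (hf'.negPart.comp_fst μ),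
          integral_fun_snd (fun x ↦ (f x - m)⁺), integral_fun_fst (fun x ↦ (f x - m)⁻)]
        simp

end IndependentCopies

/-- for `P_Y ≪ P_X` with likelihood ratio `L := dP_Y/dP_X` having an
atomless distribution under `P_X`, and independent `Z_X ~ P_X`, `Z_Y ~ P_Y`,
`(1/2)·d_tv(P_X,P_Y) ≤ P(L(Z_X) < L(Z_Y)) − 1/2 ≤ d_tv(P_X,P_Y)`. -/
theorem statement0 {E : Type*} [MeasurableSpace E] (PX PY : Measure E)
    [IsProbabilityMeasure PX] [IsProbabilityMeasure PY] (hac : PY ≪ PX)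
    (L : E → ℝ) (hL : L = fun z => (PY.rnDeriv PX z).toReal)
    (hatomless : ∀ c : ℝ, PX {z | L z = c} = 0) :
    (1 / 2) * tvDist PX PY ≤ ((PX.prod PY) {p | L p.1 < L p.2}).toReal - 1 / 2 ∧
      ((PX.prod PY) {p | L p.1 < L p.2}).toReal - 1 / 2 ≤ tvDist PX PY := by
  have hLm : Measurable L := hL ▸ (Measure.measurable_rnDeriv PY PX).ennreal_toReal
  have hLint : Integrable L PX := hL ▸ Measure.integrable_toReal_rnDeriv
  have hL1 : ∫ x, L x ∂PX = 1 := by simp [hL, Measure.integral_toReal_rnDeriv hac]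
  have hTV : tvDist PX PY = ∫ x, (L x - 1)⁺ ∂PX := by
    rw [hL]; exact tvDist_eq_integral_posPart_rnDeriv_sub_one PX PY hac
  have hP : ((PX.prod PY) {p | L p.1 < L p.2}).toReal =
      ∫ p in {p | L p.1 < L p.2}, L p.2 ∂(PX.prod PX) := by
    rw [prod_apply_toReal_eq_setIntegral_rnDeriv PX PX PY hac (S := {p | L p.1 < L p.2})
      (measurableSet_lt (hLm.comp measurable_fst) (hLm.comp measurable_snd)), hL]
  have hJ := two_mul_setIntegral_lt_snd_sub_integral hLint hLm hatomless
  have hlow := integral_negPart_sub_integral_le_integral_prod hLint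
  have hup := integral_prod_posPart_sub_le hLint
  have hsymm := integral_posPart_sub_eq_integral_negPart_sub hLint
  rw [hL1] at hJ hlow hup hsymm
  constructor <;> linarith
end

section
/- Let P_X and P_Y be probability measures on a common measurable space (E, ℰ) with P_Y absolutely continuous with respect to P_X, and suppose L := dP_Y/dP_X has a continuous (atomless) distribution under P_X. Define δ := E| L(Z_X) − L(Z'_X) | for independent Z_X, Z'_X each distributed according to P_X. Then 2·d_tv(P_X, P_Y) ≤ δ ≤ 4·d_tv(P_X, P_Y). -/
/-!
Both bounds go through the mean absolute deviation `I := E|L(Z_X) − 1|`.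
Since `L − 1` has `P_X`-mean zero, `P_Y(A) − P_X(A) = ∫_A (L − 1) dP_X` is at most `I / 2` in
absolute value, with equality for `A = {L ≥ 1}`; hence `2·d_tv = I`. On the other hand, for any
integrable `f` under a probability measure, Jensen's inequality in the second variable gives
`E|f(Z) − E f| ≤ E|f(Z) − f(Z')|`, and the triangle inequality through `E f = 1` gives
`E|f(Z) − f(Z')| ≤ 2·E|f(Z) − 1|`.
-/

open MeasureTheory ProbabilityTheory

section MeanZero

variable {Ω : Type*} [MeasurableSpace Ω] {μ : Measure Ω} {f : Ω → ℝ}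

lemma two_mul_abs_setIntegral_le_integral_abs (hf : Integrable f μ) (hf0 : ∫ x, f x ∂μ = 0)
    {s : Set Ω} (hs : MeasurableSet s) :
    2 * |∫ x in s, f x ∂μ| ≤ ∫ x, |f x| ∂μ := by
  have hcompl : ∫ x in sᶜ, f x ∂μ = -∫ x in s, f x ∂μ := by
    linarith [integral_add_compl hs hf]
  calc 2 * |∫ x in s, f x ∂μ| = |∫ x in s, f x ∂μ| + |∫ x in sᶜ, f x ∂μ| := by
        rw [hcompl, abs_neg]; ring
    _ ≤ ∫ x in s, |f x| ∂μ + ∫ x in sᶜ, |f x| ∂μ :=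
        add_le_add abs_integral_le_integral_abs abs_integral_le_integral_abs
    _ = ∫ x, |f x| ∂μ := integral_add_compl hs hf.abs

lemma two_mul_setIntegral_nonneg_eq_integral_abs (hf : Integrable f μ) (hfm : Measurable f)
    (hf0 : ∫ x, f x ∂μ = 0) :
    2 * ∫ x in {x | 0 ≤ f x}, f x ∂μ = ∫ x, |f x| ∂μ := by
  have hs : MeasurableSet {x | 0 ≤ f x} := measurableSet_le measurable_const hfm
  have hlevelSet : ∫ x in {x | 0 ≤ f x}, |f x| ∂μ = ∫ x in {x | 0 ≤ f x}, f x ∂μ :=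
    setIntegral_congr_fun hs fun x hx => abs_of_nonneg hx
  have hneg : ∫ x in {x | 0 ≤ f x}ᶜ, |f x| ∂μ = -∫ x in {x | 0 ≤ f x}ᶜ, f x ∂μ := by
    rw [← integral_neg]
    exact setIntegral_congr_fun hs.compl fun x hx => abs_of_neg (not_le.mp hx)
  linarith [integral_add_compl hs hf, integral_add_compl hs hf.abs]

end MeanZero

section GiniMeanDifference

variable {Ω : Type*} [MeasurableSpace Ω] {μ : Measure Ω} [IsProbabilityMeasure μ] {f : Ω → ℝ}

lemma integral_abs_sub_integral_le_integral_prod (hf : Integrable f μ) :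
    ∫ x, |f x - ∫ y, f y ∂μ| ∂μ ≤ ∫ p, |f p.1 - f p.2| ∂μ.prod μ := by
  have hdiff : Integrable (fun p : Ω × Ω => |f p.1 - f p.2|) (μ.prod μ) :=
    ((hf.comp_fst μ).sub (hf.comp_snd μ)).abs
  rw [integral_prod _ hdiff]
  refine integral_mono (hf.sub (integrable_const _)).abs hdiff.integral_prod_left fun x => ?_
  have hmean : ∫ y, (f x - f y) ∂μ = f x - ∫ y, f y ∂μ := by
    rw [integral_sub (integrable_const _) hf, integral_const, probReal_univ, one_smul]
  calc |f x - ∫ y, f y ∂μ| = |∫ y, (f x - f y) ∂μ| := by rw [hmean]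
    _ ≤ ∫ y, |f x - f y| ∂μ := abs_integral_le_integral_abs

lemma integral_prod_le_two_mul_integral_abs_sub (hf : Integrable f μ) (c : ℝ) :
    ∫ p, |f p.1 - f p.2| ∂μ.prod μ ≤ 2 * ∫ x, |f x - c| ∂μ := by
  have hdev : Integrable (fun x => |f x - c|) μ := (hf.sub (integrable_const c)).abs
  calc ∫ p, |f p.1 - f p.2| ∂μ.prod μ
      ≤ ∫ p, (|f p.1 - c| + |f p.2 - c|) ∂μ.prod μ := by
        refine integral_mono (((hf.comp_fst μ).sub (hf.comp_snd μ)).abs)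
          ((hdev.comp_fst μ).add (hdev.comp_snd μ)) fun p => ?_
        simpa only [abs_sub_comm c] using abs_sub_le (f p.1) c (f p.2)
    _ = 2 * ∫ x, |f x - c| ∂μ := by
        rw [integral_add (hdev.comp_fst μ) (hdev.comp_snd μ), integral_fun_fst (fun x => |f x - c|),
          integral_fun_snd (fun x => |f x - c|)]
        simp only [probReal_univ, one_smul]
        ring

end GiniMeanDifference

lemma two_mul_tvDist_eq_integral_abs_rnDeriv_sub_one {E : Type*} [MeasurableSpace E]
    {PX PY : Measure E} [IsProbabilityMeasure PX] [IsProbabilityMeasure PY] (hac : PY ≪ PX) :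
    2 * tvDist PX PY = ∫ x, |(PY.rnDeriv PX x).toReal - 1| ∂PX := by
  set f : E → ℝ := fun x => (PY.rnDeriv PX x).toReal - 1
  have hf : Integrable f PX := Measure.integrable_toReal_rnDeriv.sub (integrable_const 1)
  have hfm : Measurable f := (Measure.measurable_rnDeriv PY PX).ennreal_toReal.sub measurable_const
  have hset : ∀ s, (PY s).toReal - (PX s).toReal = ∫ x in s, f x ∂PX := fun s => by
    rw [integral_sub Measure.integrable_toReal_rnDeriv.integrableOn (integrable_const 1),
      Measure.setIntegral_toReal_rnDeriv hac, setIntegral_const, smul_eq_mul, mul_one]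
    rfl
  have hf0 : ∫ x, f x ∂PX = 0 := by
    simpa using (hset Set.univ).symm
  have hle : ∀ A : {s : Set E // MeasurableSet s},
      |(PY A.1).toReal - (PX A.1).toReal| ≤ (∫ x, |f x| ∂PX) / 2 := fun A => by
    rw [hset]; linarith [two_mul_abs_setIntegral_le_integral_abs hf hf0 A.2]
  have hbdd : BddAbove (Set.range fun A : {s : Set E // MeasurableSet s} =>
      |(PY A.1).toReal - (PX A.1).toReal|) := ⟨_, Set.forall_mem_range.mpr hle⟩
  have hlower : (∫ x, |f x| ∂PX) / 2 ≤ tvDist PX PY := by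
    have hlevelSet : |(PY {x | 0 ≤ f x}).toReal - (PX {x | 0 ≤ f x}).toReal| ≤ tvDist PX PY :=
      le_ciSup hbdd ⟨{x | 0 ≤ f x}, measurableSet_le measurable_const hfm⟩
    rw [hset] at hlevelSet
    linarith [le_abs_self (∫ x in {x | 0 ≤ f x}, f x ∂PX),
      two_mul_setIntegral_nonneg_eq_integral_abs hf hfm hf0]
  have hupper : tvDist PX PY ≤ (∫ x, |f x| ∂PX) / 2 :=
    have : Nonempty {s : Set E // MeasurableSet s} := ⟨⟨∅, MeasurableSet.empty⟩⟩
    ciSup_le hle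
  linarith

theorem statement1_general {E : Type*} [MeasurableSpace E] (PX PY : Measure E)
    [IsProbabilityMeasure PX] [IsProbabilityMeasure PY] (hac : PY ≪ PX)
    (L : E → ℝ) (hL : L = fun z => (PY.rnDeriv PX z).toReal)
    (δ : ℝ) (hδ : δ = ∫ p, |L p.1 - L p.2| ∂(PX.prod PX)) :
    2 * tvDist PX PY ≤ δ ∧ δ ≤ 4 * tvDist PX PY := by
  subst hδ
  have hLint : Integrable L PX := hL ▸ Measure.integrable_toReal_rnDeriv
  have hLmean : ∫ x, L x ∂PX = 1 := by
    rw [hL, Measure.integral_toReal_rnDeriv hac, probReal_univ]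
  have htv : 2 * tvDist PX PY = ∫ x, |L x - 1| ∂PX := by
    rw [two_mul_tvDist_eq_integral_abs_rnDeriv_sub_one hac, hL]
  have hlower := integral_abs_sub_integral_le_integral_prod hLint
  have hupper := integral_prod_le_two_mul_integral_abs_sub hLint 1
  rw [hLmean] at hlower
  constructor <;> linarith

/-- with `L := dP_Y/dP_X` atomless under `P_X`, and
`δ := E|L(Z_X) − L(Z'_X)|` for independent `Z_X, Z'_X ~ P_X`,
`2·d_tv(P_X,P_Y) ≤ δ ≤ 4·d_tv(P_X,P_Y)`. -/
theorem statement1 {E : Type*} [MeasurableSpace E] (PX PY : Measure E)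
    [IsProbabilityMeasure PX] [IsProbabilityMeasure PY] (hac : PY ≪ PX)
    (L : E → ℝ) (hL : L = fun z => (PY.rnDeriv PX z).toReal)
    (hatomless : ∀ c : ℝ, PX {z | L z = c} = 0)
    (δ : ℝ) (hδ : δ = ∫ p, |L p.1 - L p.2| ∂(PX.prod PX)) :
    2 * tvDist PX PY ≤ δ ∧ δ ≤ 4 * tvDist PX PY :=
  statement1_general PX PY hac L hL δ hδ
end

section
/- Let P_X and P_Y be probability measures on a common measurable space (E, ℰ) with P_Y absolutely continuous with respect to P_X, and suppose L := dP_Y/dP_X has a continuous (atomless) distribution under P_X. Define δ := E|L(Z_X) − L(Z'_X)| for independent Z_X, Z'_X ~ P_X, and μ := P( L(Z_X) < L(Z_Y) ) for independent Z_X ~ P_X and Z_Y ~ P_Y. Then δ = 4μ − 2, equivalently μ = 1/2 + δ/4. -/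
/-!
Splitting `|L x - L x'|` according to which of `L x`, `L x'` is larger and using the symmetry
of `P_X ⊗ P_X` gives `δ = 2 (∫_{L x < L x'} L x' - ∫_{L x' < L x} L x')`. Since `L` is the
density of `P_Y`, integrating `L x'` over a set against `P_X ⊗ P_X` is the `P_X ⊗ P_Y`-probability
of that set, so `δ = 2 (μ - P(L(Z_Y) < L(Z_X)))`, and atomlessness makes the two probabilities
sum to one.
-/

namespace MeasureTheory

variable {α : Type*} [MeasurableSpace α]

theorem integral_abs_sub_prod_self {μ : Measure α} [IsFiniteMeasure μ] {g : α → ℝ}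
    (hgm : Measurable g) (hgi : Integrable g μ) :
    ∫ p, |g p.1 - g p.2| ∂(μ.prod μ) =
      2 * (∫ p in {p | g p.1 < g p.2}, g p.2 ∂(μ.prod μ) -
        ∫ p in {p | g p.2 < g p.1}, g p.2 ∂(μ.prod μ)) := by
  set S : Set (α × α) := {p | g p.1 < g p.2}
  set T : Set (α × α) := {p | g p.2 < g p.1}
  have hS : MeasurableSet S := measurableSet_lt (by fun_prop) (by fun_prop)
  have hT : MeasurableSet T := measurableSet_lt (by fun_prop) (by fun_prop)
  have hi₁ : Integrable (fun p : α × α ↦ g p.1) (μ.prod μ) := hgi.comp_fst μ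
  have hi₂ : Integrable (fun p : α × α ↦ g p.2) (μ.prod μ) := hgi.comp_snd μ
  have hswap (s : Set (α × α)) (f : α × α → ℝ) :
      ∫ p in Prod.swap ⁻¹' s, f p.swap ∂(μ.prod μ) = ∫ p in s, f p ∂(μ.prod μ) :=
    Measure.measurePreserving_swap.setIntegral_preimage_emb
      MeasurableEquiv.prodComm.measurableEmbedding f s
  have habs (p : α × α) : |g p.1 - g p.2| =
      S.indicator (fun p ↦ g p.2 - g p.1) p + T.indicator (fun p ↦ g p.1 - g p.2) p := by
    rcases lt_trichotomy (g p.1) (g p.2) with h | h | h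
    · simp [S, T, h, h.not_gt, abs_of_neg (sub_neg.2 h)]
    · simp [S, T, h]
    · simp [S, T, h, h.not_gt, abs_of_pos (sub_pos.2 h)]
  calc ∫ p, |g p.1 - g p.2| ∂(μ.prod μ)
      = ∫ p in S, (g p.2 - g p.1) ∂(μ.prod μ) + ∫ p in T, (g p.1 - g p.2) ∂(μ.prod μ) := by
        have hiS : Integrable (S.indicator fun p ↦ g p.2 - g p.1) (μ.prod μ) :=
          (hi₂.sub hi₁).indicator hS
        have hiT : Integrable (T.indicator fun p ↦ g p.1 - g p.2) (μ.prod μ) :=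
          (hi₁.sub hi₂).indicator hT
        simp_rw [habs]
        rw [integral_add hiS hiT, integral_indicator hS, integral_indicator hT]
    _ = 2 * ∫ p in S, (g p.2 - g p.1) ∂(μ.prod μ) := by
        rw [show ∫ p in T, (g p.1 - g p.2) ∂(μ.prod μ) = ∫ p in S, (g p.2 - g p.1) ∂(μ.prod μ)
          from hswap S fun p ↦ g p.2 - g p.1]
        ring
    _ = 2 * (∫ p in S, g p.2 ∂(μ.prod μ) - ∫ p in T, g p.2 ∂(μ.prod μ)) := by
        rw [integral_sub hi₂.integrableOn hi₁.integrableOn, ← hswap T fun p ↦ g p.2]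
        rfl

theorem setIntegral_toReal_rnDeriv_snd (κ : Measure α) [SFinite κ] {μ ν : Measure α}
    [SigmaFinite μ] [SigmaFinite ν] (hνμ : ν ≪ μ) {s : Set (α × α)} (hs : MeasurableSet s) :
    ∫ p in s, (ν.rnDeriv μ p.2).toReal ∂(κ.prod μ) = (κ.prod ν).real s := by
  have hprod : κ.prod ν = (κ.prod μ).withDensity fun p ↦ ν.rnDeriv μ p.2 := by
    conv_lhs => rw [← Measure.withDensity_rnDeriv_eq ν μ hνμ]
    exact prod_withDensity_right (Measure.measurable_rnDeriv ν μ)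
  have hfin : ∀ᵐ p ∂(κ.prod μ), ν.rnDeriv μ p.2 < ⊤ :=
    Measure.quasiMeasurePreserving_snd.ae (Measure.rnDeriv_lt_top ν μ)
  rw [hprod, measureReal_def, withDensity_apply _ hs,
    integral_toReal (by fun_prop) (ae_restrict_of_ae hfin)]

theorem prod_setOf_eq_eq_zero (κ : Measure α) {ν : Measure α} [SFinite ν] {g : α → ℝ}
    (hgm : Measurable g) (hν : ∀ c, ν {y | g y = c} = 0) :
    (κ.prod ν) {p | g p.1 = g p.2} = 0 := by
  rw [Measure.prod_apply (measurableSet_eq_fun (by fun_prop) (by fun_prop))]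
  have hslice (x : α) : ν (Prod.mk x ⁻¹' {p | g p.1 = g p.2}) = 0 := by
    rw [← hν (g x)]
    exact congrArg ν (Set.ext fun _ ↦ eq_comm)
  simp only [hslice, lintegral_zero]

theorem prod_real_setOf_lt_add_real_setOf_gt (κ ν : Measure α) [IsProbabilityMeasure κ]
    [IsProbabilityMeasure ν] {g : α → ℝ} (hgm : Measurable g) (hν : ∀ c, ν {y | g y = c} = 0) :
    (κ.prod ν).real {p | g p.1 < g p.2} + (κ.prod ν).real {p | g p.2 < g p.1} = 1 := by
  have hE : MeasurableSet {p : α × α | g p.1 = g p.2} :=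
    measurableSet_eq_fun (by fun_prop) (by fun_prop)
  have hT : MeasurableSet {p : α × α | g p.2 < g p.1} :=
    measurableSet_lt (by fun_prop) (by fun_prop)
  have hdisj : Disjoint {p : α × α | g p.1 < g p.2} {p | g p.2 < g p.1} :=
    Set.disjoint_left.2 fun _ h₁ h₂ ↦ lt_asymm (α := ℝ) h₁ h₂
  have hunion : {p : α × α | g p.1 < g p.2} ∪ {p | g p.2 < g p.1} = {p | g p.1 = g p.2}ᶜ := by
    ext p
    exact (ne_iff_lt_or_gt (α := ℝ)).symm
  rw [← measureReal_union hdisj hT, hunion, measureReal_def,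
    (prob_compl_eq_one_iff hE).2 (prod_setOf_eq_eq_zero κ hgm hν), ENNReal.toReal_one]

end MeasureTheory

open MeasureTheory

/-- with `L := dP_Y/dP_X` atomless under `P_X`,
`δ := E|L(Z_X) − L(Z'_X)|` for independent `Z_X, Z'_X ~ P_X`, and
`μ := P(L(Z_X) < L(Z_Y))` for independent `Z_X ~ P_X, Z_Y ~ P_Y`, one has
`δ = 4μ − 2`, equivalently `μ = 1/2 + δ/4`. -/
theorem statement4 {E : Type*} [MeasurableSpace E] (PX PY : Measure E)
    [IsProbabilityMeasure PX] [IsProbabilityMeasure PY] (hac : PY ≪ PX)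
    (L : E → ℝ) (hL : L = fun z => (PY.rnDeriv PX z).toReal)
    (hatomless : ∀ c : ℝ, PX {z | L z = c} = 0)
    (δ : ℝ) (hδ : δ = ∫ p, |L p.1 - L p.2| ∂(PX.prod PX))
    (μ : ℝ) (hμ : μ = ((PX.prod PY) {p | L p.1 < L p.2}).toReal) :
    δ = 4 * μ - 2 ∧ μ = 1 / 2 + δ / 4 := by
  have hLm : Measurable L := hL ▸ (Measure.measurable_rnDeriv PY PX).ennreal_toReal
  have hLi : Integrable L PX := hL ▸ Measure.integrable_toReal_rnDeriv
  have hdensity {s : Set (E × E)} (hs : MeasurableSet s) :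
      ∫ p in s, L p.2 ∂(PX.prod PX) = (PX.prod PY).real s := by
    subst hL
    exact setIntegral_toReal_rnDeriv_snd PX hac hs
  have hlt : ∫ p in {p | L p.1 < L p.2}, L p.2 ∂(PX.prod PX) = μ := by
    rw [hμ, hdensity (measurableSet_lt (by fun_prop) (by fun_prop)), measureReal_def]
  have hgt := hdensity (s := {p | L p.2 < L p.1}) (measurableSet_lt (by fun_prop) (by fun_prop))
  have hsum := prod_real_setOf_lt_add_real_setOf_gt PX PY hLm fun c ↦ hac (hatomless c)
  rw [integral_abs_sub_prod_self hLm hLi, hlt, hgt] at hδ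
  rw [← measureReal_def] at hμ
  constructor <;> linarith
end

section
/- Let P_X and P_Y be probability measures on a common measurable space (E, ℰ) with P_Y absolutely continuous with respect to P_X, and suppose L := dP_Y/dP_X has a continuous (atomless) distribution under P_X. Define δ := E|L(Z_X) − L(Z'_X)| for independent Z_X, Z'_X ~ P_X, μ := P( L(Z_X) < L(Z_Y) ) for independent Z_X ~ P_X, Z_Y ~ P_Y, and μ_XY := P( L(Z_X) < L(Z_Y) and L(Z'_X) < L(Z_Y) ) for independent Z_X, Z'_X ~ P_X and Z_Y ~ P_Y. Then 1/3 + δ/6 ≤ μ_XY ≤ 1/3 + δ/2; consequently there is a universal constant C > 0 such that the variance σ_XY := μ_XY − μ² satisfies | σ_XY − 1/12 | ≤ C·δ. -/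
/-!
Push everything forward to the law `ν` of `L` under `P_X`: it is atomless, carried by `[0, ∞)`
and has mean `1`, and the law of `L` under `P_Y` is `t ν(dt)`. Write `F(r) = ν(-∞, r)`.
Integrating `F(a) = ν {b | b < a}` over `b` first gives the recursion
`∫_{(r,∞)} F^(n+1) dν = F(r) ∫_{(r,∞)} F^n dν + ∫_{(r,∞)} ∫_{(b,∞)} F^n dν dν(b)`, whence
`∫_{(r,∞)} F^n dν = (1 - F(r)^(n+1)) / (n+1)` by induction. By the layer-cake formula
`E[F(L(Z_Y))^n] = ∫_{(0,∞)} (1 - F^(n+1)) / (n+1) dr`, while `δ = 2 ∫ F (1 - F) dr`. Hence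
`μ = 1/2 + δ/4` and `μ_XY = 1/3 + δ/6 + (1/3) ∫ F² (1 - F) dr` with
`0 ≤ ∫ F² (1 - F) ≤ ∫ F (1 - F) = δ/2 ≤ 1`, and both claims follow, with `C = 1`.
-/

open MeasureTheory Set
open scoped ENNReal

namespace RankStatistics

lemma measurable_measure_Iio (ν : Measure ℝ) : Measurable fun r => ν (Iio r) :=
  Monotone.measurable fun _ _ h => measure_mono (Iio_subset_Iio h)

lemma measurable_measure_Ioi (ν : Measure ℝ) : Measurable fun r => ν (Ioi r) :=
  Antitone.measurable fun _ _ h => measure_mono (Ioi_subset_Ioi h)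

lemma measurable_setLIntegral_Ioi (ν : Measure ℝ) (f : ℝ → ℝ≥0∞) :
    Measurable fun r => ∫⁻ a in Ioi r, f a ∂ν :=
  Antitone.measurable fun _ _ h => lintegral_mono_set (Ioi_subset_Ioi h)

lemma lintegral_mul_ofReal_eq_lintegral_Ioi {ν : Measure ℝ} (hν : ∀ᵐ t ∂ν, 0 ≤ t)
    {g : ℝ → ℝ≥0∞} (hg : Measurable g) :
    ∫⁻ t, g t * ENNReal.ofReal t ∂ν = ∫⁻ r in Ioi 0, ∫⁻ a in Ioi r, g a ∂ν := by
  have h := lintegral_eq_lintegral_meas_lt (ν.withDensity g)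
    (withDensity_absolutelyContinuous ν g hν) measurable_id.aemeasurable
  rw [lintegral_withDensity_eq_lintegral_mul _ hg ENNReal.measurable_ofReal] at h
  refine h.trans ?_
  congr 1 with r
  exact withDensity_apply _ measurableSet_Ioi

lemma lintegral_ofReal_sub_prod (ν ν' : Measure ℝ) [SFinite ν] [SFinite ν'] :
    ∫⁻ p, ENNReal.ofReal (p.2 - p.1) ∂(ν.prod ν') = ∫⁻ r, ν (Iio r) * ν' (Ici r) := by
  have hvol : ∀ p : ℝ × ℝ,
      ENNReal.ofReal (p.2 - p.1) = ∫⁻ r, (Iio r ×ˢ Ici r).indicator 1 p := by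
    intro p
    rw [← Real.volume_Ioc, ← lintegral_indicator_one measurableSet_Ioc]
    congr 1 with r
  have hmeas : Measurable (Function.uncurry fun (p : ℝ × ℝ) r =>
      (Iio r ×ˢ Ici r).indicator (1 : ℝ × ℝ → ℝ≥0∞) p) := by
    have : (Function.uncurry fun (p : ℝ × ℝ) r =>
          (Iio r ×ˢ Ici r).indicator (1 : ℝ × ℝ → ℝ≥0∞) p)
        = {x : (ℝ × ℝ) × ℝ | x.1.1 < x.2 ∧ x.2 ≤ x.1.2}.indicator 1 := by
      ext x
      simp [Function.uncurry, indicator_apply]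
    rw [this]
    exact measurable_one.indicator <|
      (measurableSet_lt (measurable_fst.comp measurable_fst) measurable_snd).inter
        (measurableSet_le measurable_snd (measurable_snd.comp measurable_fst))
  simp_rw [hvol]
  rw [lintegral_lintegral_swap hmeas.aemeasurable]
  simp_rw [lintegral_indicator_one (measurableSet_Iio.prod measurableSet_Ici), Measure.prod_prod]

lemma lintegral_ofReal_abs_sub_prod (ν : Measure ℝ) [SFinite ν] [NullSingletonClass ν] :
    ∫⁻ p, ENNReal.ofReal |p.1 - p.2| ∂(ν.prod ν) = 2 * ∫⁻ r, ν (Ioi r) * ν (Iio r) := by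
  have hsplit : ∀ x y : ℝ,
      ENNReal.ofReal |x - y| = ENNReal.ofReal (y - x) + ENNReal.ofReal (x - y) := by
    intro x y
    rcases le_total x y with h | h
    · rw [abs_of_nonpos (sub_nonpos.2 h), neg_sub, ENNReal.ofReal_of_nonpos (sub_nonpos.2 h),
        add_zero]
    · rw [abs_of_nonneg (sub_nonneg.2 h), ENNReal.ofReal_of_nonpos (sub_nonpos.2 h), zero_add]
  simp_rw [hsplit]
  rw [lintegral_add_left (by fun_prop),
    ← lintegral_prod_swap (fun p => ENNReal.ofReal (p.1 - p.2))]
  simp only [Prod.fst_swap, Prod.snd_swap, ← two_mul, lintegral_ofReal_sub_prod,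
    measure_congr Ioi_ae_eq_Ici, mul_comm (ν (Ici _))]

lemma lintegral_ofReal_abs_sub_prod_of_nonneg {ν : Measure ℝ} [SFinite ν] [NullSingletonClass ν]
    (hν : ∀ᵐ t ∂ν, 0 ≤ t) :
    ∫⁻ p, ENNReal.ofReal |p.1 - p.2| ∂(ν.prod ν)
      = 2 * ∫⁻ r in Ioi 0, ν (Ioi r) * ν (Iio r) ∂volume := by
  have hneg : ν {t | t < 0} = 0 := by simpa [ae_iff] using hν
  rw [lintegral_ofReal_abs_sub_prod, ← lintegral_add_compl _ (measurableSet_Ioi (a := (0 : ℝ))),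
    compl_Ioi, setLIntegral_congr_fun measurableSet_Iic fun r hr => by
      rw [measure_mono_null (Iio_subset_Iio hr) hneg, mul_zero], lintegral_zero, add_zero]

lemma setLIntegral_Ioi_pow_succ {ν : Measure ℝ} [SFinite ν] [NullSingletonClass ν]
    (n : ℕ) (r : ℝ) :
    ∫⁻ a in Ioi r, ν (Iio a) ^ (n + 1) ∂ν
      = ν (Iio r) * ∫⁻ a in Ioi r, ν (Iio a) ^ n ∂ν
        + ∫⁻ b in Ioi r, ∫⁻ a in Ioi b, ν (Iio a) ^ n ∂ν ∂ν := by
  set K : ℝ → ℝ≥0∞ := fun b => ∫⁻ a in Ioi b, ν (Iio a) ^ n ∂ν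
  have hslice : ∀ a,
      ν (Iio a) ^ (n + 1) = ∫⁻ b, (Iio a).indicator (fun _ => ν (Iio a) ^ n) b ∂ν :=
    fun a => by rw [lintegral_indicator_const measurableSet_Iio, pow_succ]
  have hmeas : Measurable
      (Function.uncurry fun a b => (Iio a).indicator (fun _ => ν (Iio a) ^ n) b) := by
    have : (Function.uncurry fun a b => (Iio a).indicator (fun _ => ν (Iio a) ^ n) b)
        = {p : ℝ × ℝ | p.2 < p.1}.indicator fun p => ν (Iio p.1) ^ n := by
      ext p
      simp [Function.uncurry, indicator_apply]
    rw [this]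
    exact (((measurable_measure_Iio ν).pow_const n).comp measurable_fst).indicator
      (measurableSet_lt measurable_snd measurable_fst)
  have hinner : ∀ b,
      ∫⁻ a in Ioi r, (Iio a).indicator (fun _ => ν (Iio a) ^ n) b ∂ν = K (max r b) := by
    intro b
    change _ = ∫⁻ a in Ioi (max r b), ν (Iio a) ^ n ∂ν
    rw [← lintegral_indicator measurableSet_Ioi, ← Ioi_inter_Ioi,
      ← lintegral_indicator (measurableSet_Ioi.inter measurableSet_Ioi)]
    refine lintegral_congr fun a => ?_
    simp only [indicator_apply, mem_Iio, mem_Ioi, mem_inter_iff]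
    split_ifs <;> tauto
  calc ∫⁻ a in Ioi r, ν (Iio a) ^ (n + 1) ∂ν
      = ∫⁻ b, K (max r b) ∂ν := by
        simp_rw [hslice]
        rw [lintegral_lintegral_swap hmeas.aemeasurable]
        exact lintegral_congr hinner
    _ = ∫⁻ b in Iic r, K r ∂ν + ∫⁻ b in Ioi r, K b ∂ν := by
        rw [← lintegral_add_compl _ measurableSet_Iic, compl_Iic]
        congr 1
        · exact setLIntegral_congr_fun measurableSet_Iic fun b hb => by rw [max_eq_left hb]
        · exact setLIntegral_congr_fun measurableSet_Ioi fun b hb => by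
            rw [max_eq_right hb.le]
    _ = ν (Iio r) * K r + ∫⁻ b in Ioi r, K b ∂ν := by
        rw [setLIntegral_const, measure_congr Iio_ae_eq_Iic, mul_comm]

section Atomless

variable {ν : Measure ℝ} [IsProbabilityMeasure ν] [NullSingletonClass ν]

lemma measure_Iio_add_measure_Ioi (r : ℝ) : ν (Iio r) + ν (Ioi r) = 1 := by
  rw [measure_congr Iio_ae_eq_Iic, ← compl_Ioi, add_comm,
    measure_add_measure_compl measurableSet_Ioi, measure_univ]

lemma succ_mul_setLIntegral_Ioi_pow_add_pow (n : ℕ) (r : ℝ) :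
    (n + 1) * ∫⁻ a in Ioi r, ν (Iio a) ^ n ∂ν + ν (Iio r) ^ (n + 1) = 1 := by
  induction n generalizing r with
  | zero => simp [add_comm, measure_Iio_add_measure_Ioi]
  | succ n ih =>
    set K : ℝ → ℝ≥0∞ := fun b => ∫⁻ a in Ioi b, ν (Iio a) ^ n ∂ν
    have hK : Measurable K := measurable_setLIntegral_Ioi ν _
    have htail : (n + 1) * ∫⁻ b in Ioi r, K b ∂ν + ∫⁻ b in Ioi r, ν (Iio b) ^ (n + 1) ∂ν
        = ν (Ioi r) := by
      rw [← lintegral_const_mul _ hK, ← lintegral_add_left (hK.const_mul _)]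
      simp only [K, ih, setLIntegral_const, one_mul]
    rw [setLIntegral_Ioi_pow_succ] at htail ⊢
    calc ((n + 1 : ℕ) + 1 : ℝ≥0∞) * (ν (Iio r) * K r + ∫⁻ b in Ioi r, K b ∂ν)
          + ν (Iio r) ^ (n + 1 + 1)
        = ν (Iio r) * ((n + 1) * K r + ν (Iio r) ^ (n + 1))
          + ((n + 1) * ∫⁻ b in Ioi r, K b ∂ν
            + (ν (Iio r) * K r + ∫⁻ b in Ioi r, K b ∂ν)) := by
          push_cast
          ring
      _ = 1 := by rw [ih, htail, mul_one, measure_Iio_add_measure_Ioi]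

lemma sum_measure_Ioi_mul_pow_add_pow (n : ℕ) (r : ℝ) :
    ∑ i ∈ Finset.range (n + 1), ν (Ioi r) * ν (Iio r) ^ i + ν (Iio r) ^ (n + 1) = 1 := by
  induction n with
  | zero => simp [add_comm, measure_Iio_add_measure_Ioi]
  | succ n ih =>
    rw [Finset.sum_range_succ', pow_zero, mul_one]
    calc ∑ i ∈ Finset.range (n + 1), ν (Ioi r) * ν (Iio r) ^ (i + 1) + ν (Ioi r)
          + ν (Iio r) ^ (n + 1 + 1)
        = ν (Iio r) * (∑ i ∈ Finset.range (n + 1), ν (Ioi r) * ν (Iio r) ^ i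
          + ν (Iio r) ^ (n + 1)) + ν (Ioi r) := by
          simp only [mul_add, Finset.mul_sum, mul_left_comm (ν (Iio r)), ← pow_succ']
          ring
      _ = 1 := by rw [ih, mul_one, measure_Iio_add_measure_Ioi]

/-- `1 - F(r)^(n+1) = (1 - F(r)) ∑_{i ≤ n} F(r)^i`, with `1 - F(r) = ν (Ioi r)`. -/
lemma succ_mul_setLIntegral_Ioi_pow (n : ℕ) (r : ℝ) :
    (n + 1) * ∫⁻ a in Ioi r, ν (Iio a) ^ n ∂ν
      = ∑ i ∈ Finset.range (n + 1), ν (Ioi r) * ν (Iio r) ^ i :=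
  (ENNReal.add_left_inj (ENNReal.pow_ne_top (measure_ne_top ν _))).mp <| by
    rw [succ_mul_setLIntegral_Ioi_pow_add_pow, sum_measure_Ioi_mul_pow_add_pow]

lemma succ_mul_lintegral_pow_mul_ofReal (hν : ∀ᵐ t ∂ν, 0 ≤ t) (n : ℕ) :
    (n + 1) * ∫⁻ t, ν (Iio t) ^ n * ENNReal.ofReal t ∂ν
      = ∑ i ∈ Finset.range (n + 1), ∫⁻ r in Ioi 0, ν (Ioi r) * ν (Iio r) ^ i ∂volume := by
  rw [lintegral_mul_ofReal_eq_lintegral_Ioi hν ((measurable_measure_Iio ν).pow_const n),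
    ← lintegral_const_mul _ (measurable_setLIntegral_Ioi ν _),
    ← lintegral_finsetSum (f := fun i r => ν (Ioi r) * ν (Iio r) ^ i) _
      fun i _ => (measurable_measure_Ioi ν).mul ((measurable_measure_Iio ν).pow_const i)]
  simp_rw [succ_mul_setLIntegral_Ioi_pow]

theorem exists_moment_identities (hν : ∀ᵐ t ∂ν, 0 ≤ t)
    (hmean : ∫⁻ t, ENNReal.ofReal t ∂ν = 1) :
    ∃ a b : ℝ, 0 ≤ b ∧ b ≤ a ∧ a ≤ 1 ∧
      (∫⁻ p, ENNReal.ofReal |p.1 - p.2| ∂(ν.prod ν)).toReal = 2 * a ∧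
      2 * (∫⁻ t, ν (Iio t) * ENNReal.ofReal t ∂ν).toReal = 1 + a ∧
      3 * (∫⁻ t, ν (Iio t) ^ 2 * ENNReal.ofReal t ∂ν).toReal = 1 + a + b := by
  set A : ℕ → ℝ≥0∞ := fun i => ∫⁻ r in Ioi 0, ν (Ioi r) * ν (Iio r) ^ i ∂volume
  have hA_succ : ∀ i, A (i + 1) ≤ A i := fun i => lintegral_mono fun r => by
    rw [pow_succ, ← mul_assoc]
    exact mul_le_of_le_one_right' prob_le_one
  have hA_zero : A 0 = 1 := by simpa [A, hmean] using (succ_mul_lintegral_pow_mul_ofReal hν 0).symm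
  have hA_le : ∀ i, A i ≤ 1 := fun i => hA_zero ▸ antitone_nat_of_succ_le hA_succ (Nat.zero_le i)
  have hA_ne_top : ∀ i, A i ≠ ⊤ := fun i => ne_top_of_le_ne_top ENNReal.one_ne_top (hA_le i)
  have h1 := succ_mul_lintegral_pow_mul_ofReal hν 1
  have h2 := succ_mul_lintegral_pow_mul_ofReal hν 2
  simp only [Finset.sum_range_succ, Finset.sum_range_zero, zero_add] at h1 h2
  change _ = A 0 + A 1 at h1
  change _ = A 0 + A 1 + A 2 at h2
  rw [hA_zero] at h1 h2
  norm_num only [pow_one] at h1 h2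
  refine ⟨(A 1).toReal, (A 2).toReal, ENNReal.toReal_nonneg,
    ENNReal.toReal_mono (hA_ne_top 1) (hA_succ 1),
    ENNReal.toReal_le_of_le_ofReal zero_le_one (by simpa using hA_le 1), ?_, ?_, ?_⟩
  · rw [lintegral_ofReal_abs_sub_prod_of_nonneg hν, ENNReal.toReal_mul]
    simp [A]
  · have := congrArg ENNReal.toReal h1
    rwa [ENNReal.toReal_mul, ENNReal.toReal_add ENNReal.one_ne_top (hA_ne_top 1)] at this
  · have := congrArg ENNReal.toReal h2
    rwa [ENNReal.toReal_mul,
      ENNReal.toReal_add (ENNReal.add_ne_top.2 ⟨ENNReal.one_ne_top, hA_ne_top 1⟩) (hA_ne_top 2),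
      ENNReal.toReal_add ENNReal.one_ne_top (hA_ne_top 1)] at this

end Atomless

lemma bounds_of_moment_identities {δ μ μXY a b : ℝ} (hb : 0 ≤ b) (hba : b ≤ a) (ha : a ≤ 1)
    (hδ : δ = 2 * a) (hμ : 2 * μ = 1 + a) (hμXY : 3 * μXY = 1 + a + b) :
    (1 / 3 + δ / 6 ≤ μXY ∧ μXY ≤ 1 / 3 + δ / 2) ∧ |μXY - μ ^ 2 - 1 / 12| ≤ δ := by
  have hμ' : μ = (1 + a) / 2 := by linarith
  subst hδ hμ'
  exact ⟨⟨by linarith, by linarith⟩, abs_le.2 ⟨by nlinarith, by nlinarith⟩⟩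

section Transfer

variable {E : Type*} [MeasurableSpace E] {f : E → ℝ}

lemma prod_setOf_lt (P Q : Measure E) [SFinite P] [SFinite Q] (hf : Measurable f) :
    (P.prod Q) {p | f p.1 < f p.2} = ∫⁻ z, P.map f (Iio (f z)) ∂Q := by
  have hS : MeasurableSet {p : E × E | f p.1 < f p.2} :=
    measurableSet_lt (hf.comp measurable_fst) (hf.comp measurable_snd)
  rw [Measure.prod_apply_symm hS]
  congr 1 with z
  rw [Measure.map_apply hf measurableSet_Iio]
  rfl

lemma prod_prod_setOf_lt_and_lt (P Q : Measure E) [SFinite P] [SFinite Q] (hf : Measurable f) :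
    (P.prod (P.prod Q)) {p | f p.1 < f p.2.2 ∧ f p.2.1 < f p.2.2}
      = ∫⁻ z, P.map f (Iio (f z)) ^ 2 ∂Q := by
  have hS : MeasurableSet {p : E × E × E | f p.1 < f p.2.2 ∧ f p.2.1 < f p.2.2} :=
    (measurableSet_lt (hf.comp measurable_fst) (hf.comp measurable_snd.snd)).inter
      (measurableSet_lt (hf.comp measurable_snd.fst) (hf.comp measurable_snd.snd))
  rw [← Measure.prodAssoc_prod, Measure.map_apply MeasurableEquiv.prodAssoc.measurable hS,
    Measure.prod_apply_symm (MeasurableEquiv.prodAssoc.measurable hS)]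
  congr 1 with z
  have hslice : (fun q : E × E => (q, z)) ⁻¹' (MeasurableEquiv.prodAssoc ⁻¹'
      {p : E × E × E | f p.1 < f p.2.2 ∧ f p.2.1 < f p.2.2})
      = (f ⁻¹' Iio (f z)) ×ˢ (f ⁻¹' Iio (f z)) := rfl
  rw [hslice, Measure.prod_prod, Measure.map_apply hf measurableSet_Iio, sq]

lemma lintegral_comp_toReal_rnDeriv {P Q : Measure E} [SigmaFinite P] [SigmaFinite Q]
    (hQP : Q ≪ P) {g : ℝ → ℝ≥0∞} (hg : Measurable g) :
    ∫⁻ z, g (Q.rnDeriv P z).toReal ∂Q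
      = ∫⁻ t, g t * ENNReal.ofReal t ∂(P.map fun z => (Q.rnDeriv P z).toReal) := by
  have hL : Measurable fun z => (Q.rnDeriv P z).toReal :=
    (Measure.measurable_rnDeriv Q P).ennreal_toReal
  rw [lintegral_map (f := fun t => g t * ENNReal.ofReal t) (by fun_prop) hL,
    ← lintegral_rnDeriv_mul hQP (f := fun z => g (Q.rnDeriv P z).toReal)
      (hg.comp hL).aemeasurable]
  refine lintegral_congr_ae ?_
  filter_upwards [Measure.rnDeriv_lt_top Q P] with z hz
  rw [ENNReal.ofReal_toReal hz.ne, mul_comm]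

lemma integral_abs_sub_prod (P : Measure E) [SFinite P] (hf : Measurable f) :
    ∫ p, |f p.1 - f p.2| ∂(P.prod P)
      = (∫⁻ q, ENNReal.ofReal |q.1 - q.2| ∂((P.map f).prod (P.map f))).toReal := by
  rw [integral_eq_lintegral_of_nonneg_ae (ae_of_all _ fun _ => abs_nonneg _) (by fun_prop),
    Measure.map_prod_map _ _ hf hf, lintegral_map (by fun_prop) (hf.prodMap hf)]
  rfl

end Transfer

end RankStatistics

open RankStatistics

/-- with `L := dP_Y/dP_X` atomless under `P_X`, `δ := E|L(Z_X) − L(Z'_X)|`,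
`μ := P(L(Z_X) < L(Z_Y))` and `μ_XY := P(L(Z_X) < L(Z_Y) ∧ L(Z'_X) < L(Z_Y))`
(for independent `Z_X, Z'_X ~ P_X`, `Z_Y ~ P_Y`), one has
`1/3 + δ/6 ≤ μ_XY ≤ 1/3 + δ/2`, and there is a universal constant `C > 0` such that
`σ_XY := μ_XY − μ²` satisfies `|σ_XY − 1/12| ≤ C·δ`. -/
theorem statement5 :
    ∃ C : ℝ, 0 < C ∧
      ∀ (E : Type) [MeasurableSpace E] (PX PY : Measure E)
        [IsProbabilityMeasure PX] [IsProbabilityMeasure PY],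
        PY ≪ PX →
        ∀ (L : E → ℝ), L = (fun z => (PY.rnDeriv PX z).toReal) →
        (∀ c : ℝ, PX {z | L z = c} = 0) →
        ∀ (δ : ℝ), δ = ∫ p, |L p.1 - L p.2| ∂(PX.prod PX) →
        ∀ (μ : ℝ), μ = ((PX.prod PY) {p | L p.1 < L p.2}).toReal →
        ∀ (μXY : ℝ),
          μXY = ((PX.prod (PX.prod PY))
            {p | L p.1 < L p.2.2 ∧ L p.2.1 < L p.2.2}).toReal →
        ∀ (σXY : ℝ), σXY = μXY - μ ^ 2 →
          (1 / 3 + δ / 6 ≤ μXY ∧ μXY ≤ 1 / 3 + δ / 2) ∧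
            |σXY - 1 / 12| ≤ C * δ := by
  refine ⟨1, one_pos, ?_⟩
  intro E _ PX PY _ _ hac L hL_def hatom δ hδ μ hμ μXY hμXY σXY hσ
  have hL : Measurable L := hL_def ▸ (Measure.measurable_rnDeriv PY PX).ennreal_toReal
  set ν := PX.map L
  have : IsProbabilityMeasure ν := Measure.isProbabilityMeasure_map hL.aemeasurable
  have : NullSingletonClass ν :=
    ⟨fun c => by rw [Measure.map_apply hL (measurableSet_singleton c)]; exact hatom c⟩
  have hlaw : ∀ g : ℝ → ℝ≥0∞, Measurable g →
      ∫⁻ z, g (L z) ∂PY = ∫⁻ t, g t * ENNReal.ofReal t ∂ν := by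
    subst hL_def
    exact fun g hg => lintegral_comp_toReal_rnDeriv hac hg
  have hν : ∀ᵐ t ∂ν, 0 ≤ t := (ae_map_iff hL.aemeasurable measurableSet_Ici).2 <|
    ae_of_all _ fun z => hL_def ▸ ENNReal.toReal_nonneg
  have hmean : ∫⁻ t, ENNReal.ofReal t ∂ν = 1 := by
    simpa using (hlaw (fun _ => 1) measurable_const).symm
  obtain ⟨a, b, hb, hba, ha, hδa, hμa, hμXYa⟩ := exists_moment_identities hν hmean
  rw [one_mul, hσ]
  refine bounds_of_moment_identities hb hba ha ?_ ?_ ?_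
  · rw [hδ, integral_abs_sub_prod PX hL, hδa]
  · rw [hμ, prod_setOf_lt PX PY hL, hlaw _ (measurable_measure_Iio ν), hμa]
  · rw [hμXY, prod_prod_setOf_lt_and_lt PX PY hL,
      hlaw _ ((measurable_measure_Iio ν).pow_const 2), hμXYa]
end

section
/- Let P_X and P_Y be probability measures on a common measurable space (E, ℰ) with P_Y absolutely continuous with respect to P_X, let L := dP_Y/dP_X, and suppose L(Z) has a continuous (atomless) distribution both when Z ~ P_X and when Z ~ P_Y. Let F_X (respectively F_Y) denote the cumulative distribution function of L(Z) when Z ~ P_X (respectively Z ~ P_Y), and define δ := E|L(Z_X) − L(Z'_X)| for independent Z_X, Z'_X ~ P_X. Then for Z_X ~ P_X, (1/3)·(1 − δ/2) ≤ E[ F_X(L(Z_X)) · F_Y(L(Z_X)) ] ≤ 1/3. -/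
/-!
Push everything forward to the law `ν` of `L` under `P_X`: it is atomless with mean `1`,
`F_X` is its cdf `F`, and `F_Y(t) = G(t) := ∫_{x ≤ t} x dν`. For atomless `ν`, Fubini and the
symmetry of `ν ⊗ ν` give `∫_{x ≥ y} F dν = (1 - F(y)²)/2`, hence `2 ∫ F G dν = ∫ x (1 - F(x)²) dν`.
With the shortfall `φ(t) := ∫ (t - x)⁺ dν = t F(t) - G(t)` this becomes
`3 ∫ F G dν = 1 - ∫ F φ dν`, and `0 ≤ ∫ F φ dν ≤ ∫ φ dν = δ/2` because `0 ≤ F ≤ 1` and `φ ≥ 0`.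
-/

open MeasureTheory ProbabilityTheory Set
open scoped ENNReal

lemma lintegral_measure_Iio_self {μ : Measure ℝ} [SFinite μ] [NullSingletonClass μ] :
    ∫⁻ x, μ (Iio x) ∂μ = μ univ ^ 2 / 2 := by
  have hmono : Monotone fun x => μ (Iio x) := fun a b hab => measure_mono (Iio_subset_Iio hab)
  -- `{y < x}` and `{x < y}` have the same `μ ⊗ μ`-mass; together they miss only the null diagonal.
  have hswap : ∫⁻ x, μ (Ioi x) ∂μ = ∫⁻ x, μ (Iio x) ∂μ := by
    have hlt : Measurable ({q : ℝ × ℝ | q.1 < q.2}.indicator (1 : ℝ × ℝ → ℝ≥0∞)) :=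
      measurable_one.indicator (measurableSet_lt measurable_fst measurable_snd)
    simpa [← lintegral_indicator_one measurableSet_Ioi, ← lintegral_indicator_one measurableSet_Iio,
      indicator_apply] using lintegral_lintegral_swap (μ := μ) (ν := μ)
        (f := fun x y => {q : ℝ × ℝ | q.1 < q.2}.indicator (1 : ℝ × ℝ → ℝ≥0∞) (x, y))
        hlt.aemeasurable
  have hsum (x : ℝ) : μ (Iio x) + μ (Ioi x) = μ univ := by
    rw [← measure_union ((Iio_disjoint_Ici le_rfl).mono_right Ioi_subset_Ici_self)
      measurableSet_Ioi, Iio_union_Ioi, ← Measure.restrict_apply_univ, restrict_compl_singleton]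
  refine (ENNReal.eq_div_iff two_ne_zero ENNReal.ofNat_ne_top).2 ?_
  rw [two_mul]
  nth_rw 2 [← hswap]
  rw [← lintegral_add_left hmono.measurable, lintegral_congr hsum, lintegral_const, sq]

lemma integral_measureReal_Iio_self {μ : Measure ℝ} [IsFiniteMeasure μ] [NullSingletonClass μ] :
    ∫ x, μ.real (Iio x) ∂μ = μ.real univ ^ 2 / 2 := by
  have hmono : Monotone fun x => μ.real (Iio x) := fun a b hab =>
    measureReal_mono (Iio_subset_Iio hab)
  rw [integral_eq_lintegral_of_nonneg_ae (.of_forall fun _ => measureReal_nonneg)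
    hmono.measurable.aestronglyMeasurable, lintegral_congr fun x => ofReal_measureReal,
    lintegral_measure_Iio_self, ENNReal.toReal_div, ENNReal.toReal_pow, measureReal_def,
    ENNReal.toReal_ofNat]

section cdf

variable {ν : Measure ℝ} [IsProbabilityMeasure ν]

lemma integrable_cdf : Integrable (cdf ν) ν :=
  .of_bound (cdf ν).mono.measurable.aestronglyMeasurable 1 (.of_forall fun x => by
    rw [Real.norm_eq_abs, abs_of_nonneg (cdf_nonneg ν x)]
    exact cdf_le_one ν x)

lemma integrable_cdf_mul_indicator_Iic {w : ℝ → ℝ} (hw : Integrable w ν) :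
    Integrable (fun p : ℝ × ℝ => cdf ν p.1 * (Iic p.1).indicator w p.2) (ν.prod ν) := by
  have hind : (fun p : ℝ × ℝ => (Iic p.1).indicator w p.2)
      = {q : ℝ × ℝ | q.2 ≤ q.1}.indicator (fun q => w q.2) := by
    ext p
    simp only [indicator_apply, mem_Iic, mem_ofPred_eq]
  refine (hw.norm.comp_snd ν).mono'
    (((cdf ν).mono.measurable.comp measurable_fst).aestronglyMeasurable.mul
      (hind ▸ hw.aestronglyMeasurable.comp_snd.indicator
        (measurableSet_le measurable_snd measurable_fst))) (.of_forall fun p => ?_)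
  rw [norm_mul, Real.norm_of_nonneg (cdf_nonneg ν _)]
  exact (mul_le_of_le_one_left (norm_nonneg _) (cdf_le_one ν _)).trans
    (norm_indicator_le_norm_self _ _)

lemma integrable_cdf_mul_setIntegral_Iic {w : ℝ → ℝ} (hw : Integrable w ν) :
    Integrable (fun x => cdf ν x * ∫ y in Iic x, w y ∂ν) ν := by
  simpa only [integral_const_mul, integral_indicator measurableSet_Iic] using
    (integrable_cdf_mul_indicator_Iic hw).integral_prod_left

variable [NullSingletonClass ν]

lemma cdf_eq_measureReal_Iio (x : ℝ) : cdf ν x = ν.real (Iio x) := by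
  rw [cdf_eq_real, measureReal_congr Iio_ae_eq_Iic]

lemma setIntegral_cdf_Ici (t : ℝ) : ∫ x in Ici t, cdf ν x ∂ν = (1 - cdf ν t ^ 2) / 2 := by
  have htotal : ∫ x, cdf ν x ∂ν = 1 / 2 := by
    simp_rw [cdf_eq_measureReal_Iio]
    rw [integral_measureReal_Iio_self, probReal_univ]
    norm_num
  have hlower : ∫ x in Iio t, cdf ν x ∂ν = cdf ν t ^ 2 / 2 := by
    rw [setIntegral_congr_fun measurableSet_Iio
      (g := fun x => (ν.restrict (Iio t)).real (Iio x)), integral_measureReal_Iio_self,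
      measureReal_restrict_apply_univ, ← cdf_eq_measureReal_Iio]
    intro x hx
    dsimp only
    rw [measureReal_restrict_apply measurableSet_Iio, Iio_inter_Iio, min_eq_left hx.le,
      cdf_eq_measureReal_Iio]
  rw [← integral_add_compl (measurableSet_Iio (a := t)) integrable_cdf, compl_Iio] at htotal
  linarith

lemma integral_cdf_mul_setIntegral_Iic {w : ℝ → ℝ} (hw : Integrable w ν) :
    ∫ x, cdf ν x * ∫ y in Iic x, w y ∂ν ∂ν = ∫ y, w y * ((1 - cdf ν y ^ 2) / 2) ∂ν := by
  have hg := integrable_cdf_mul_indicator_Iic hw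
  have hinner (y : ℝ) : ∫ x, cdf ν x * (Iic x).indicator w y ∂ν
      = w y * ((1 - cdf ν y ^ 2) / 2) := by
    have hpt (x : ℝ) : cdf ν x * (Iic x).indicator w y = (Ici y).indicator (cdf ν) x * w y := by
      by_cases h : y ≤ x <;> simp [h]
    simp_rw [hpt]
    rw [integral_mul_const, integral_indicator measurableSet_Ici, setIntegral_cdf_Ici, mul_comm]
  simp_rw [← hinner]
  rw [← integral_prod_symm _ hg, integral_prod _ hg]
  simp only [integral_const_mul, integral_indicator measurableSet_Iic]

end cdf

section shortfall

variable {ν : Measure ℝ} [IsProbabilityMeasure ν]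

lemma integrable_max_sub_zero (hX : Integrable (fun x => x) ν) :
    Integrable (fun p : ℝ × ℝ => max (p.1 - p.2) 0) (ν.prod ν) :=
  ((hX.comp_fst ν).sub (hX.comp_snd ν)).pos_part

lemma integral_max_sub_zero_eq_sub (hX : Integrable (fun x => x) ν) (t : ℝ) :
    ∫ x, max (t - x) 0 ∂ν = t * cdf ν t - ∫ x in Iic t, x ∂ν := by
  have hpt : (fun x => max (t - x) 0) = (Iic t).indicator (fun x => t - x) := by
    ext x
    by_cases h : x ≤ t <;> simp [h, le_of_lt, not_le.1]
  rw [hpt, integral_indicator measurableSet_Iic, integral_sub (integrable_const t) hX.restrict,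
    setIntegral_const, cdf_eq_real, smul_eq_mul, mul_comm]

lemma integral_integral_max_sub_zero (hX : Integrable (fun x => x) ν) :
    ∫ t, ∫ x, max (t - x) 0 ∂ν ∂ν = (∫ p, |p.1 - p.2| ∂(ν.prod ν)) / 2 := by
  have h := integrable_max_sub_zero hX
  have hswap : ∫ p, max (p.2 - p.1) 0 ∂(ν.prod ν) = ∫ p, max (p.1 - p.2) 0 ∂(ν.prod ν) :=
    integral_prod_swap (fun p : ℝ × ℝ => max (p.1 - p.2) 0)
  have habs : ∫ p, |p.1 - p.2| ∂(ν.prod ν)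
      = ∫ p, max (p.1 - p.2) 0 ∂(ν.prod ν) + ∫ p, max (p.2 - p.1) 0 ∂(ν.prod ν) := by
    rw [← integral_add h (g := fun p => max (p.2 - p.1) 0) h.swap]
    congr with p
    rw [← max_zero_add_max_neg_zero_eq_abs_self, neg_sub]
  rw [habs, hswap, ← integral_prod _ h]
  ring

end shortfall

lemma three_mul_integral_cdf_mul_setIntegral_Iic {ν : Measure ℝ} [IsProbabilityMeasure ν]
    [NullSingletonClass ν] (hX : Integrable (fun x => x) ν) :
    3 * ∫ t, cdf ν t * ∫ x in Iic t, x ∂ν ∂ν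
      = ∫ x, x ∂ν - ∫ t, cdf ν t * ∫ x, max (t - x) 0 ∂ν ∂ν := by
  have hF2 : Integrable (fun t => t * cdf ν t ^ 2) ν := by
    refine hX.mul_bdd ((cdf ν).mono.measurable.pow_const 2).aestronglyMeasurable
      (c := 1) (.of_forall fun t => ?_)
    rw [Real.norm_of_nonneg (by positivity)]
    exact pow_le_one₀ (cdf_nonneg ν t) (cdf_le_one ν t)
  have hFG := integrable_cdf_mul_setIntegral_Iic hX
  have hI := integral_cdf_mul_setIntegral_Iic hX
  have hsplit : ∫ y, y * ((1 - cdf ν y ^ 2) / 2) ∂ν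
      = (∫ x, x ∂ν - ∫ t, t * cdf ν t ^ 2 ∂ν) / 2 := by
    rw [← integral_sub hX hF2, ← integral_div]
    congr with y
    ring
  have hJ : ∫ t, cdf ν t * ∫ x, max (t - x) 0 ∂ν ∂ν
      = ∫ t, t * cdf ν t ^ 2 ∂ν - ∫ t, cdf ν t * ∫ x in Iic t, x ∂ν ∂ν := by
    rw [← integral_sub hF2 hFG]
    congr with t
    rw [integral_max_sub_zero_eq_sub hX]
    ring
  rw [hJ, hI, hsplit]
  ring

lemma integral_cdf_mul_setIntegral_Iic_mem_Icc {ν : Measure ℝ} [IsProbabilityMeasure ν]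
    [NullSingletonClass ν] (hX : Integrable (fun x => x) ν) :
    ∫ t, cdf ν t * ∫ x in Iic t, x ∂ν ∂ν ∈
      Icc ((∫ x, x ∂ν - (∫ p, |p.1 - p.2| ∂(ν.prod ν)) / 2) / 3) ((∫ x, x ∂ν) / 3) := by
  have hshort_nonneg (t : ℝ) : 0 ≤ ∫ x, max (t - x) 0 ∂ν :=
    integral_nonneg fun _ => le_max_right _ _
  have hshort : Integrable (fun t => ∫ x, max (t - x) 0 ∂ν) ν :=
    (integrable_max_sub_zero hX).integral_prod_left
  have hlower : 0 ≤ ∫ t, cdf ν t * ∫ x, max (t - x) 0 ∂ν ∂ν :=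
    integral_nonneg fun t => mul_nonneg (cdf_nonneg ν t) (hshort_nonneg t)
  have hupper : ∫ t, cdf ν t * ∫ x, max (t - x) 0 ∂ν ∂ν ≤ ∫ t, ∫ x, max (t - x) 0 ∂ν ∂ν :=
    integral_mono (hshort.bdd_mul (cdf ν).mono.measurable.aestronglyMeasurable (c := 1)
      (.of_forall fun t => by rw [Real.norm_of_nonneg (cdf_nonneg ν t)]; exact cdf_le_one ν t))
      hshort fun t => mul_le_of_le_one_left (hshort_nonneg t) (cdf_le_one ν t)
  rw [integral_integral_max_sub_zero hX] at hupper
  have := three_mul_integral_cdf_mul_setIntegral_Iic hX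
  constructor <;> linarith

lemma setIntegral_map_toReal_rnDeriv {E : Type*} [MeasurableSpace E] {PX PY : Measure E}
    [SigmaFinite PX] [SigmaFinite PY] (hac : PY ≪ PX) {L : E → ℝ}
    (hL : L = fun z => (PY.rnDeriv PX z).toReal) {s : Set ℝ} (hs : MeasurableSet s) :
    ∫ x in s, x ∂(PX.map L) = PY.real (L ⁻¹' s) := by
  subst hL
  rw [setIntegral_map (f := fun x => x) hs aestronglyMeasurable_id
    (PY.measurable_rnDeriv PX).ennreal_toReal.aemeasurable, Measure.setIntegral_toReal_rnDeriv hac]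

theorem statement7_general {E : Type*} [MeasurableSpace E] (PX PY : Measure E)
    [IsProbabilityMeasure PX] [IsProbabilityMeasure PY] (hac : PY ≪ PX)
    (L : E → ℝ) (hL : L = fun z => (PY.rnDeriv PX z).toReal)
    (hatomlessX : ∀ c : ℝ, PX {z | L z = c} = 0)
    (FX FY : ℝ → ℝ)
    (hFX : FX = fun t => (PX {z | L z ≤ t}).toReal)
    (hFY : FY = fun t => (PY {z | L z ≤ t}).toReal)
    (δ : ℝ) (hδ : δ = ∫ p, |L p.1 - L p.2| ∂(PX.prod PX)) :
    (1 / 3) * (1 - δ / 2) ≤ ∫ z, FX (L z) * FY (L z) ∂PX ∧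
      (∫ z, FX (L z) * FY (L z) ∂PX) ≤ 1 / 3 := by
  have hLm : Measurable L := hL ▸ (PY.measurable_rnDeriv PX).ennreal_toReal
  set ν := PX.map L
  have : IsProbabilityMeasure ν := Measure.isProbabilityMeasure_map hLm.aemeasurable
  have : NullSingletonClass ν :=
    ⟨fun c => by rw [Measure.map_apply hLm (measurableSet_singleton c)]; exact hatomlessX c⟩
  have hX : Integrable (fun x => x) ν :=
    (integrable_map_measure aestronglyMeasurable_id hLm.aemeasurable).2
      (hL ▸ Measure.integrable_toReal_rnDeriv)
  have hmean : ∫ x, x ∂ν = 1 := by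
    simpa using setIntegral_map_toReal_rnDeriv hac hL MeasurableSet.univ
  have hFX' : FX = cdf ν := by
    ext t
    rw [hFX, cdf_eq_real, measureReal_def, Measure.map_apply hLm measurableSet_Iic]
    rfl
  have hFY' : FY = fun t => ∫ x in Iic t, x ∂ν := by
    ext t
    rw [hFY, setIntegral_map_toReal_rnDeriv hac hL measurableSet_Iic]
    rfl
  have hI : ∫ z, FX (L z) * FY (L z) ∂PX = ∫ t, cdf ν t * ∫ x in Iic t, x ∂ν ∂ν := by
    rw [hFX', hFY', integral_map hLm.aemeasurable
      (integrable_cdf_mul_setIntegral_Iic hX).aestronglyMeasurable]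
  have hδ' : δ = ∫ p, |p.1 - p.2| ∂(ν.prod ν) := by
    rw [hδ, Measure.map_prod_map PX PX hLm hLm, integral_map (f := fun p : ℝ × ℝ => |p.1 - p.2|)
      (hLm.prodMap hLm).aemeasurable (measurable_fst.sub measurable_snd).abs.aestronglyMeasurable]
    rfl
  have hbounds := integral_cdf_mul_setIntegral_Iic_mem_Icc hX
  rw [hmean, ← hδ', ← hI, mem_Icc] at hbounds
  constructor <;> linarith [hbounds.1, hbounds.2]

/-- with `L := dP_Y/dP_X` having atomless law under both `P_X` and `P_Y`,
CDFs `F_X`, `F_Y` of `L(Z)` under `P_X`, `P_Y`, and `δ := E|L(Z_X) − L(Z'_X)|`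
for independent `Z_X, Z'_X ~ P_X`, one has, for `Z_X ~ P_X`,
`(1/3)·(1 − δ/2) ≤ E[F_X(L(Z_X))·F_Y(L(Z_X))] ≤ 1/3`. -/
theorem statement7 {E : Type*} [MeasurableSpace E] (PX PY : Measure E)
    [IsProbabilityMeasure PX] [IsProbabilityMeasure PY] (hac : PY ≪ PX)
    (L : E → ℝ) (hL : L = fun z => (PY.rnDeriv PX z).toReal)
    (hatomlessX : ∀ c : ℝ, PX {z | L z = c} = 0)
    (hatomlessY : ∀ c : ℝ, PY {z | L z = c} = 0)
    (FX FY : ℝ → ℝ)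
    (hFX : FX = fun t => (PX {z | L z ≤ t}).toReal)
    (hFY : FY = fun t => (PY {z | L z ≤ t}).toReal)
    (δ : ℝ) (hδ : δ = ∫ p, |L p.1 - L p.2| ∂(PX.prod PX)) :
    (1 / 3) * (1 - δ / 2) ≤ ∫ z, FX (L z) * FY (L z) ∂PX ∧
      (∫ z, FX (L z) * FY (L z) ∂PX) ≤ 1 / 3 :=
  statement7_general PX PY hac L hL hatomlessX FX FY hFX hFY δ hδ
end

section
/- Let P_X and P_Y be probability measures on a common measurable space (E, ℰ) with P_Y absolutely continuous with respect to P_X, let L := dP_Y/dP_X, and suppose L(Z) has a continuous (atomless) distribution both when Z ~ P_X and when Z ~ P_Y. Let F_X, F_Y be the cumulative distribution functions of L(Z) under P_X and P_Y respectively, δ := E|L(Z_X) − L(Z'_X)| for independent Z_X, Z'_X ~ P_X, and μ := P(L(Z_X) < L(Z_Y)) for independent Z_X ~ P_X, Z_Y ~ P_Y. Define, for Z_X ~ P_X, the random variable W := F_Y(L(Z_X)) − (1 − μ) + F_X(L(Z_X)) − 1/2. Then E[W] = 0 and there exists a universal constant C > 0 such that | Var(W) − 1/3 | ≤ C·δ;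 in particular Var(W) → 1/3 as δ → 0. -/
/-!
Write `F = cdf ν` for an atomless law `ν` on `ℝ`. Comparing two independent copies, which tie
with probability zero, gives `∫ F dν = 1/2`, and applying this to `ν` restricted to `(-∞, t)`
gives `F(t)² = 2 ∫_{s<t} F dν`, whence `∫ F² dν = 1/3` by Fubini. So `U := F_X(L(Z_X))` has
the first two moments of a uniform variable. Moreover `E[F_Y(L(Z_X))] = 1 - μ`, and
`F_Y(t) - F_X(t) = E[(L - 1); L ≤ t]` is bounded by `E|L - 1| ≤ δ` (Jensen). Hence
`W = (2U - 1) + R` with `|R| ≤ 2δ`, and `|W² - (2U - 1)²| ≤ 5δ` pointwise, while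
`E(2U - 1)² = 1/3`.
-/

open MeasureTheory ProbabilityTheory Set

section

variable {ν ρ : Measure ℝ}

lemma measurable_measure_Iic (ν : Measure ℝ) : Measurable fun t => ν (Iic t) :=
  Monotone.measurable fun _ _ hab => measure_mono (Iic_subset_Iic.2 hab)

lemma lintegral_measure_Iic_eq_prod [SFinite ν] [SFinite ρ] :
    ∫⁻ t, ρ (Iic t) ∂ν = ν.prod ρ {p | p.2 ≤ p.1} := by
  rw [Measure.prod_apply (measurableSet_le measurable_snd measurable_fst)]
  rfl

lemma lintegral_measure_Iio_eq_prod [SFinite ν] [SFinite ρ] :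
    ∫⁻ t, ν (Iio t) ∂ρ = ν.prod ρ {p | p.1 < p.2} := by
  rw [Measure.prod_apply_symm (measurableSet_lt measurable_fst measurable_snd)]
  rfl

lemma two_mul_lintegral_measure_Iic_self [SFinite ν] [NullSingletonClass ν] :
    2 * ∫⁻ t, ν (Iic t) ∂ν = ν univ ^ 2 := by
  have hle : MeasurableSet {p : ℝ × ℝ | p.2 ≤ p.1} :=
    measurableSet_le measurable_snd measurable_fst
  have hlt : {p : ℝ × ℝ | p.2 ≤ p.1}ᶜ = {p | p.1 < p.2} := by ext; simp
  calc 2 * ∫⁻ t, ν (Iic t) ∂ν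
      = ∫⁻ t, ν (Iic t) ∂ν + ∫⁻ t, ν (Iio t) ∂ν := by
        simp_rw [two_mul, measure_congr (Iio_ae_eq_Iic (μ := ν))]
    _ = ν univ ^ 2 := by
        rw [lintegral_measure_Iic_eq_prod, lintegral_measure_Iio_eq_prod, ← hlt,
          measure_add_measure_compl hle, ← univ_prod_univ, Measure.prod_prod, sq]

lemma two_mul_setLIntegral_Iio_measure_Iic [IsFiniteMeasure ν] [NullSingletonClass ν] (t : ℝ) :
    2 * ∫⁻ s in Iio t, ν (Iic s) ∂ν = ν (Iic t) ^ 2 := by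
  have h := two_mul_lintegral_measure_Iic_self (ν := ν.restrict (Iio t))
  rw [Measure.restrict_apply_univ, measure_congr Iio_ae_eq_Iic] at h
  rw [← h, setLIntegral_congr_fun measurableSet_Iio fun s hs => ?_]
  rw [Measure.restrict_apply measurableSet_Iic, inter_eq_left.2 (Iic_subset_Iio.2 hs)]

/-- With `F t = ν (Iic t)`: `∫ F² = 2 ∫∫_{s<t} F(s)` by
`two_mul_setLIntegral_Iio_measure_Iic`; swapping the integrals turns this into
`2 ∫ F (1 - F)`, and with `∫ F = 1/2` this forces `∫ F² = 1/3`. -/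
lemma three_mul_lintegral_measure_Iic_sq_self [IsProbabilityMeasure ν] [NullSingletonClass ν] :
    3 * ∫⁻ t, ν (Iic t) ^ 2 ∂ν = 1 := by
  have hmeas :
      Measurable (Function.uncurry fun t s => (Iio t).indicator (fun s => ν (Iic s)) s) :=
    ((measurable_measure_Iic ν).comp measurable_snd).indicator
      (measurableSet_lt measurable_snd measurable_fst)
  have hswap :
      ∫⁻ t, ν (Iic t) ^ 2 ∂ν = 2 * ∫⁻ s, ν (Iic s) * (1 - ν (Iic s)) ∂ν := by
    calc ∫⁻ t, ν (Iic t) ^ 2 ∂ν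
        = 2 * ∫⁻ t, ∫⁻ s, (Iio t).indicator (fun s => ν (Iic s)) s ∂ν ∂ν := by
          rw [← lintegral_const_mul 2 hmeas.lintegral_prod_right]
          congr 1 with t
          rw [lintegral_indicator measurableSet_Iio, two_mul_setLIntegral_Iio_measure_Iic]
      _ = 2 * ∫⁻ s, ∫⁻ t, (Ioi s).indicator (fun _ => ν (Iic s)) t ∂ν ∂ν := by
          rw [lintegral_lintegral_swap hmeas.aemeasurable]
          rfl
      _ = 2 * ∫⁻ s, ν (Iic s) * (1 - ν (Iic s)) ∂ν := by
          simp_rw [lintegral_indicator_const measurableSet_Ioi, ← compl_Iic,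
            prob_compl_eq_one_sub measurableSet_Iic]
  have hsplit : ∫⁻ t, ν (Iic t) ^ 2 ∂ν + ∫⁻ s, ν (Iic s) * (1 - ν (Iic s)) ∂ν
      = ∫⁻ t, ν (Iic t) ∂ν := by
    rw [← lintegral_add_left ((measurable_measure_Iic ν).pow_const 2)]
    congr 1 with t
    rw [sq, ← mul_add, add_tsub_cancel_of_le prob_le_one, mul_one]
  calc 3 * ∫⁻ t, ν (Iic t) ^ 2 ∂ν
      = 2 * (∫⁻ t, ν (Iic t) ^ 2 ∂ν + ∫⁻ s, ν (Iic s) * (1 - ν (Iic s)) ∂ν) := by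
        rw [hswap]; ring
    _ = 1 := by
        rw [hsplit, two_mul_lintegral_measure_Iic_self, measure_univ, one_pow]

lemma integral_cdf_self [IsProbabilityMeasure ν] [NullSingletonClass ν] :
    ∫ t, cdf ν t ∂ν = 1 / 2 := by
  have h := congrArg ENNReal.toReal (two_mul_lintegral_measure_Iic_self (ν := ν))
  rw [ENNReal.toReal_mul, measure_univ] at h
  simp_rw [cdf_eq_real, measureReal_def]
  rw [integral_toReal (measurable_measure_Iic ν).aemeasurable
    (ae_of_all _ fun _ => measure_lt_top _ _)]
  norm_num at h
  linarith

lemma integral_cdf_sq_self [IsProbabilityMeasure ν] [NullSingletonClass ν] :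
    ∫ t, cdf ν t ^ 2 ∂ν = 1 / 3 := by
  have h := congrArg ENNReal.toReal (three_mul_lintegral_measure_Iic_sq_self (ν := ν))
  rw [ENNReal.toReal_mul] at h
  simp_rw [cdf_eq_real, measureReal_def, ← ENNReal.toReal_pow]
  rw [integral_toReal ((measurable_measure_Iic ν).pow_const 2).aemeasurable
    (ae_of_all _ fun _ => ENNReal.pow_lt_top (measure_lt_top _ _))]
  norm_num at h
  linarith

lemma integral_cdf [IsProbabilityMeasure ν] [IsProbabilityMeasure ρ] :
    ∫ t, cdf ρ t ∂ν = 1 - (ν.prod ρ).real {p | p.1 < p.2} := by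
  have hlt : {p : ℝ × ℝ | p.1 < p.2}ᶜ = {p | p.2 ≤ p.1} := by ext; simp
  simp_rw [cdf_eq_real, measureReal_def]
  rw [integral_toReal (measurable_measure_Iic ρ).aemeasurable
    (ae_of_all _ fun _ => measure_lt_top _ _), lintegral_measure_Iic_eq_prod, ← hlt]
  exact probReal_compl_eq_one_sub (measurableSet_lt measurable_fst measurable_snd)

end

section

variable {E : Type*} [MeasurableSpace E]

lemma abs_measureReal_sub_le_integral_abs_rnDeriv_sub_one {P Q : Measure E} [IsFiniteMeasure P]
    [IsFiniteMeasure Q] (hQP : Q ≪ P) (s : Set E) :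
    |Q.real s - P.real s| ≤ ∫ z, |(Q.rnDeriv P z).toReal - 1| ∂P := by
  have hint : Integrable (fun z => (Q.rnDeriv P z).toReal - 1) P :=
    Measure.integrable_toReal_rnDeriv.sub (integrable_const 1)
  have hdiff : Q.real s - P.real s = ∫ z in s, ((Q.rnDeriv P z).toReal - 1) ∂P := by
    rw [integral_sub Measure.integrable_toReal_rnDeriv.integrableOn (integrable_const 1),
      Measure.setIntegral_toReal_rnDeriv hQP, setIntegral_const, smul_eq_mul, mul_one]
  rw [hdiff]
  exact (abs_integral_le_integral_abs).trans
    (setIntegral_le_integral hint.abs (ae_of_all _ fun _ => abs_nonneg _))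

lemma integral_abs_sub_integral_le_integral_prod_s8 {P : Measure E} [IsProbabilityMeasure P]
    {f : E → ℝ} (hf : Integrable f P) :
    ∫ z, |f z - ∫ w, f w ∂P| ∂P ≤ ∫ p, |f p.1 - f p.2| ∂(P.prod P) := by
  have hprod : Integrable (fun p : E × E => |f p.1 - f p.2|) (P.prod P) :=
    ((hf.comp_fst P).sub (hf.comp_snd P)).abs
  have hpt : ∀ z, |f z - ∫ w, f w ∂P| ≤ ∫ w, |f z - f w| ∂P := fun z => by
    have hmean : ∫ w, (f z - f w) ∂P = f z - ∫ w, f w ∂P := by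
      rw [integral_sub (integrable_const _) hf, integral_const, probReal_univ, one_smul]
    rw [← hmean]
    exact abs_integral_le_integral_abs
  rw [integral_prod _ hprod]
  exact integral_mono (hf.sub (integrable_const _)).abs hprod.integral_prod_left hpt

lemma integral_abs_rnDeriv_sub_one_le_integral_prod {P Q : Measure E} [IsProbabilityMeasure P]
    [IsProbabilityMeasure Q] (hQP : Q ≪ P) :
    ∫ z, |(Q.rnDeriv P z).toReal - 1| ∂P
      ≤ ∫ p, |(Q.rnDeriv P p.1).toReal - (Q.rnDeriv P p.2).toReal| ∂(P.prod P) := by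
  simpa [Measure.integral_toReal_rnDeriv hQP] using
    integral_abs_sub_integral_le_integral_prod_s8
      (Measure.integrable_toReal_rnDeriv (μ := Q) (ν := P))

lemma integral_eq_zero_and_abs_variance_sub_third_le {P : Measure E} [IsProbabilityMeasure P]
    {U V : E → ℝ} {m η : ℝ} (hU : Measurable U) (hV : Measurable V)
    (hU01 : ∀ z, U z ∈ Icc (0 : ℝ) 1) (hV01 : ∀ z, V z ∈ Icc (0 : ℝ) 1)
    (hU1 : ∫ z, U z ∂P = 1 / 2) (hU2 : ∫ z, U z ^ 2 ∂P = 1 / 3) (hVm : ∫ z, V z ∂P = m)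
    (hUV : ∀ z, |V z - U z| ≤ η) :
    ∫ z, (V z - m + U z - 1 / 2) ∂P = 0 ∧
      |variance (fun z => V z - m + U z - 1 / 2) P - 1 / 3| ≤ 5 * η := by
  have hUL : MemLp U 2 P := .of_bound hU.aestronglyMeasurable 1 (ae_of_all _ fun z => by
    rw [Real.norm_eq_abs, abs_le]; constructor <;> linarith [(hU01 z).1, (hU01 z).2])
  have hVL : MemLp V 2 P := .of_bound hV.aestronglyMeasurable 1 (ae_of_all _ fun z => by
    rw [Real.norm_eq_abs, abs_le]; constructor <;> linarith [(hV01 z).1, (hV01 z).2])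
  have hUi := hUL.integrable one_le_two
  have hVi := hVL.integrable one_le_two
  have hm : m ∈ Icc (0 : ℝ) 1 := hVm ▸ ⟨integral_nonneg fun z => (hV01 z).1,
    (integral_mono hVi (integrable_const 1) fun z => (hV01 z).2).trans_eq (by simp)⟩
  have hmU : |m - 1 / 2| ≤ η := by
    have hdiff : m - 1 / 2 = ∫ z, (V z - U z) ∂P := by rw [integral_sub hVi hUi, hVm, hU1]
    rw [hdiff]
    simpa using norm_integral_le_of_norm_le_const (μ := P) (f := fun z => V z - U z)
      (ae_of_all _ hUV)
  have hWL : MemLp (fun z => V z - m + U z - 1 / 2) 2 P :=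
    ((hVL.sub (memLp_const m)).add hUL).sub (memLp_const _)
  have hW0 : ∫ z, (V z - m + U z - 1 / 2) ∂P = 0 := by
    rw [integral_sub, integral_add, integral_sub, hVm, hU1] <;> try fun_prop
    simp
  refine ⟨hW0, ?_⟩
  have hBL : MemLp (fun z => 2 * U z - 1) 2 P := (hUL.const_mul 2).sub (memLp_const 1)
  have hB : ∫ z, (2 * U z - 1) ^ 2 ∂P = 1 / 3 := by
    have hexp : ∀ z, (2 * U z - 1) ^ 2 = 4 * U z ^ 2 - 4 * U z + 1 := fun z => by ring
    simp_rw [hexp]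
    have hU2i := hUL.integrable_sq
    rw [integral_add, integral_sub, integral_const_mul, integral_const_mul, hU2, hU1] <;>
      try fun_prop
    norm_num
  have hpt : ∀ z, |(V z - m + U z - 1 / 2) ^ 2 - (2 * U z - 1) ^ 2| ≤ 5 * η := fun z => by
    set w := V z - m + U z - 1 / 2 with hw
    have hsub : |w - (2 * U z - 1)| ≤ 2 * η := by
      calc |w - (2 * U z - 1)| = |(V z - U z) - (m - 1 / 2)| := by
            rw [hw]; ring_nf
        _ ≤ |V z - U z| + |m - 1 / 2| := abs_sub _ _
        _ ≤ 2 * η := by linarith [hUV z]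
    have hadd : |w + (2 * U z - 1)| ≤ 5 / 2 := by
      rw [abs_le]
      constructor <;> linarith [(hU01 z).1, (hU01 z).2, (hV01 z).1, (hV01 z).2, hm.1, hm.2, hw]
    calc |w ^ 2 - (2 * U z - 1) ^ 2| = |w + (2 * U z - 1)| * |w - (2 * U z - 1)| := by
          rw [sq_sub_sq, abs_mul]
      _ ≤ 5 / 2 * (2 * η) := mul_le_mul hadd hsub (abs_nonneg _) (by norm_num)
      _ = 5 * η := by ring
  rw [variance_of_integral_eq_zero hWL.aemeasurable hW0, ← hB,
    ← integral_sub hWL.integrable_sq hBL.integrable_sq]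
  have h := norm_integral_le_of_norm_le_const (μ := P)
    (f := fun z => (V z - m + U z - 1 / 2) ^ 2 - (2 * U z - 1) ^ 2) (ae_of_all _ hpt)
  rwa [Real.norm_eq_abs, probReal_univ, mul_one] at h

lemma cdf_map_apply {P : Measure E} [IsProbabilityMeasure P] {X : E → ℝ} (hX : Measurable X)
    (t : ℝ) : cdf (P.map X) t = P.real {z | X z ≤ t} := by
  have := Measure.isProbabilityMeasure_map (μ := P) hX.aemeasurable
  rw [cdf_eq_real, map_measureReal_apply hX measurableSet_Iic]
  rfl

end

/-- with `L := dP_Y/dP_X` having atomless law under `P_X` and `P_Y`,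
CDFs `F_X`, `F_Y`, `δ := E|L(Z_X) − L(Z'_X)|`, `μ := P(L(Z_X) < L(Z_Y))`, and for
`Z_X ~ P_X` the random variable `W := F_Y(L(Z_X)) − (1 − μ) + F_X(L(Z_X)) − 1/2`:
then `E[W] = 0` and there is a universal constant `C > 0` with `|Var(W) − 1/3| ≤ C·δ`. -/
theorem statement8 :
    ∃ C : ℝ, 0 < C ∧
      ∀ (E : Type) [MeasurableSpace E] (PX PY : Measure E)
        [IsProbabilityMeasure PX] [IsProbabilityMeasure PY],
        PY ≪ PX →
        ∀ (L : E → ℝ), L = (fun z => (PY.rnDeriv PX z).toReal) →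
        (∀ c : ℝ, PX {z | L z = c} = 0) →
        (∀ c : ℝ, PY {z | L z = c} = 0) →
        ∀ (FX FY : ℝ → ℝ),
          FX = (fun t => (PX {z | L z ≤ t}).toReal) →
          FY = (fun t => (PY {z | L z ≤ t}).toReal) →
        ∀ (δ : ℝ), δ = ∫ p, |L p.1 - L p.2| ∂(PX.prod PX) →
        ∀ (μ : ℝ), μ = ((PX.prod PY) {p | L p.1 < L p.2}).toReal →
        ∀ (W : E → ℝ), W = (fun z => FY (L z) - (1 - μ) + FX (L z) - 1 / 2) →
          (∫ z, W z ∂PX) = 0 ∧ |variance W PX - 1 / 3| ≤ C * δ := by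
  refine ⟨5, by norm_num, ?_⟩
  intro E _ PX PY _ _ hYX L hL hXatom _ FX FY hFX hFY δ hδ μ hμ W hW
  have hLm : Measurable L := hL ▸ (Measure.measurable_rnDeriv PY PX).ennreal_toReal
  have : IsProbabilityMeasure (PX.map L) := Measure.isProbabilityMeasure_map hLm.aemeasurable
  have : IsProbabilityMeasure (PY.map L) := Measure.isProbabilityMeasure_map hLm.aemeasurable
  have : NullSingletonClass (PX.map L) :=
    ⟨fun c => by rw [Measure.map_apply hLm (measurableSet_singleton c)]; exact hXatom c⟩
  have hFX' : FX = cdf (PX.map L) := by ext t; rw [hFX, cdf_map_apply hLm]; rfl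
  have hFY' : FY = cdf (PY.map L) := by ext t; rw [hFY, cdf_map_apply hLm]; rfl
  have hUV (z : E) : |FY (L z) - FX (L z)| ≤ δ := by
    rw [hFX, hFY, hδ, hL]
    exact (abs_measureReal_sub_le_integral_abs_rnDeriv_sub_one hYX _).trans
      (integral_abs_rnDeriv_sub_one_le_integral_prod hYX)
  subst hFX' hFY' hW
  have hmap {f : ℝ → ℝ} (hf : Measurable f) :
      ∫ z, f (L z) ∂PX = ∫ t, f t ∂(PX.map L) :=
    (integral_map hLm.aemeasurable hf.aestronglyMeasurable).symm
  have hVm : ∫ z, cdf (PY.map L) (L z) ∂PX = 1 - μ := by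
    rw [hmap (cdf _).mono.measurable, integral_cdf, Measure.map_prod_map _ _ hLm hLm,
      map_measureReal_apply (hLm.prodMap hLm) (measurableSet_lt measurable_fst measurable_snd), hμ]
    rfl
  exact integral_eq_zero_and_abs_variance_sub_third_le ((cdf _).mono.measurable.comp hLm)
    ((cdf _).mono.measurable.comp hLm) (fun _ => ⟨cdf_nonneg _ _, cdf_le_one _ _⟩)
    (fun _ => ⟨cdf_nonneg _ _, cdf_le_one _ _⟩)
    ((hmap (cdf _).mono.measurable).trans integral_cdf_self)
    ((hmap (f := fun t => cdf (PX.map L) t ^ 2) ((cdf _).mono.measurable.pow_const 2)).trans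
      integral_cdf_sq_self) hVm hUV
end

section
/- Let P_X and P_Y be probability measures on a measurable space (E, ℰ) and g : E → ℝ a measurable function such that g(Z) has a continuous (atomless) distribution with cumulative distribution function F_X when Z ~ P_X and F_Y when Z ~ P_Y. Set μ* := P( g(Z_X) < g(Z_Y) ) for independent Z_X ~ P_X, Z_Y ~ P_Y, and define the kernel h†(z, z') := 1{ g(z) < g(z') } − F_X(g(z')) + F_Y(g(z)) − 1 + μ*. Let X_1, X_2 be independent with law P_X and Y_1, Y_2 independent with law P_Y, all four mutually independent. Then E[ h†(X_1, Y_1) · h†(X_1, Y_2) ] = 0, E[ h†(X_1, Y_1) · h†(X_2, Y_1) ] = 0, and E[ h†(X_1, Y_1) · h†(X_2, Y_2) ] = 0. -/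
/-!
Since `P_X` charges no level set of `g`, `F_X(g z') = P_X(g < g z')` and
`F_Y(g z) - 1 = -P_Y(g z < g ·)`, so `h†` is the degenerate part of the Hoeffding decomposition of
the indicator kernel of `{g z < g z'}`: it integrates to zero in each variable separately. In each
of the three expectations, the second factor has a variable (`Y₂`, `X₂`, or the pair `(X₂, Y₂)`)
independent of everything else, and integrating it out first kills the expectation.
-/

open MeasureTheory ProbabilityTheory

section DegenerateKernel

variable {α β : Type*} [MeasurableSpace α] [MeasurableSpace β]
  {ρ : Measure α} {ν : Measure β} {s : Set (α × β)}

lemma measureReal_prod_eq_integral_left [SFinite ρ] [IsFiniteMeasure ν] (hs : MeasurableSet s) :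
    (ρ.prod ν).real s = ∫ x, ν.real (Prod.mk x ⁻¹' s) ∂ρ := by
  rw [measureReal_def, Measure.prod_apply hs, ← integral_toReal
    (measurable_measure_prodMk_left hs).aemeasurable (ae_of_all _ fun _ => measure_lt_top _ _)]
  rfl

lemma measureReal_prod_eq_integral_right [IsFiniteMeasure ρ] [SFinite ν] (hs : MeasurableSet s) :
    (ρ.prod ν).real s = ∫ y, ρ.real ((·, y) ⁻¹' s) ∂ν := by
  rw [measureReal_def, Measure.prod_apply_symm hs, ← integral_toReal
    (measurable_measure_prodMk_right hs).aemeasurable (ae_of_all _ fun _ => measure_lt_top _ _)]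
  rfl

/-- The degenerate part of the indicator kernel `1_s` in its Hoeffding decomposition: `1_s` minus
its two projections, plus its mean. -/
noncomputable def degenerateIndicatorKernel (ρ : Measure α) (ν : Measure β) (s : Set (α × β))
    (x : α) (y : β) : ℝ :=
  s.indicator 1 (x, y) - ρ.real ((·, y) ⁻¹' s) - ν.real (Prod.mk x ⁻¹' s) + (ρ.prod ν).real s

lemma measurable_degenerateIndicatorKernel [SFinite ρ] [SFinite ν] (hs : MeasurableSet s) :
    Measurable (Function.uncurry (degenerateIndicatorKernel ρ ν s)) := by
  unfold degenerateIndicatorKernel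
  have h1 := (measurable_measure_prodMk_right (μ := ρ) hs).ennreal_toReal
  have h2 := (measurable_measure_prodMk_left (ν := ν) hs).ennreal_toReal
  exact (((measurable_one.indicator hs).sub (h1.comp measurable_snd)).sub
    (h2.comp measurable_fst)).add_const _

variable [IsProbabilityMeasure ρ] [IsProbabilityMeasure ν]

lemma abs_degenerateIndicatorKernel_le (x : α) (y : β) :
    |degenerateIndicatorKernel ρ ν s x y| ≤ 2 := by
  obtain ⟨h0, h1⟩ : s.indicator (1 : α × β → ℝ) (x, y) ∈ Set.Icc 0 1 := by
    by_cases h : (x, y) ∈ s <;> simp [h]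
  have := measureReal_nonneg (μ := ρ) (s := (·, y) ⁻¹' s)
  have := measureReal_nonneg (μ := ν) (s := Prod.mk x ⁻¹' s)
  have := measureReal_nonneg (μ := ρ.prod ν) (s := s)
  have : ρ.real ((·, y) ⁻¹' s) ≤ 1 := measureReal_le_one
  have : ν.real (Prod.mk x ⁻¹' s) ≤ 1 := measureReal_le_one
  have : (ρ.prod ν).real s ≤ 1 := measureReal_le_one
  rw [degenerateIndicatorKernel, abs_le]
  constructor <;> linarith

lemma integral_degenerateIndicatorKernel_right (hs : MeasurableSet s) (x : α) :
    ∫ y, degenerateIndicatorKernel ρ ν s x y ∂ν = 0 := by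
  have hslice : MeasurableSet (Prod.mk x ⁻¹' s) := measurable_prodMk_left hs
  have hind : Integrable (fun y => s.indicator (1 : α × β → ℝ) (x, y)) ν :=
    (integrable_const (1 : ℝ)).indicator hslice
  have hproj : Integrable (fun y => ρ.real ((·, y) ⁻¹' s)) ν :=
    .of_mem_Icc 0 1 (measurable_measure_prodMk_right hs).ennreal_toReal.aemeasurable
      (ae_of_all _ fun _ => ⟨measureReal_nonneg, measureReal_le_one⟩)
  simp only [degenerateIndicatorKernel]
  rw [integral_add ?_ (integrable_const _), integral_sub ?_ (integrable_const _),
    integral_sub hind hproj, ← measureReal_prod_eq_integral_right hs]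
  · change ∫ y, (Prod.mk x ⁻¹' s).indicator 1 y ∂ν - _ - _ + _ = _
    simp [integral_indicator_one hslice]
  · exact hind.sub hproj
  · exact (hind.sub hproj).sub (integrable_const _)

lemma integral_degenerateIndicatorKernel_left (hs : MeasurableSet s) (y : β) :
    ∫ x, degenerateIndicatorKernel ρ ν s x y ∂ρ = 0 := by
  have hslice : MeasurableSet ((·, y) ⁻¹' s) := measurable_prodMk_right hs
  have hind : Integrable (fun x => s.indicator (1 : α × β → ℝ) (x, y)) ρ :=
    (integrable_const (1 : ℝ)).indicator hslice
  have hproj : Integrable (fun x => ν.real (Prod.mk x ⁻¹' s)) ρ :=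
    .of_mem_Icc 0 1 (measurable_measure_prodMk_left hs).ennreal_toReal.aemeasurable
      (ae_of_all _ fun _ => ⟨measureReal_nonneg, measureReal_le_one⟩)
  simp only [degenerateIndicatorKernel]
  rw [integral_add ?_ (integrable_const _), integral_sub ?_ hproj,
    integral_sub hind (integrable_const _), ← measureReal_prod_eq_integral_left hs]
  · change ∫ x, ((·, y) ⁻¹' s).indicator 1 x ∂ρ - _ - _ + _ = _
    simp [integral_indicator_one hslice]
  · exact hind.sub (integrable_const _)
  · exact (hind.sub (integrable_const _)).sub hproj

lemma integral_degenerateIndicatorKernel_prod (hs : MeasurableSet s) :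
    ∫ p, degenerateIndicatorKernel ρ ν s p.1 p.2 ∂(ρ.prod ν) = 0 := by
  have hK := measurable_degenerateIndicatorKernel (ρ := ρ) (ν := ν) hs
  rw [integral_prod (fun p => degenerateIndicatorKernel ρ ν s p.1 p.2)
    (.of_bound hK.aestronglyMeasurable 2
    (ae_of_all _ fun p => abs_degenerateIndicatorKernel_le p.1 p.2))]
  simp [integral_degenerateIndicatorKernel_right hs]

lemma integrable_degenerateIndicatorKernel_mul {γ : Type*} [MeasurableSpace γ] {m : Measure γ}
    [IsFiniteMeasure m] (hs : MeasurableSet s) {a c : γ → α} {b d : γ → β}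
    (ha : Measurable a := by fun_prop) (hb : Measurable b := by fun_prop)
    (hc : Measurable c := by fun_prop) (hd : Measurable d := by fun_prop) :
    Integrable (fun q => degenerateIndicatorKernel ρ ν s (a q) (b q) *
      degenerateIndicatorKernel ρ ν s (c q) (d q)) m := by
  have hK := measurable_degenerateIndicatorKernel (ρ := ρ) (ν := ν) hs
  refine .of_bound ((hK.comp (ha.prodMk hb)).mul (hK.comp (hc.prodMk hd))).aestronglyMeasurable
    (2 * 2) (ae_of_all _ fun q => ?_)
  rw [Real.norm_eq_abs, abs_mul]
  exact mul_le_mul (abs_degenerateIndicatorKernel_le _ _) (abs_degenerateIndicatorKernel_le _ _)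
    (abs_nonneg _) zero_le_two

end DegenerateKernel

section IndependentPairs

variable {Ω α β : Type*} [MeasurableSpace Ω] [MeasurableSpace α] [MeasurableSpace β]
  {μ : Measure Ω} {W : Ω → α} {V : Ω → β} {ρ : Measure α} {ν : Measure β}
  [IsProbabilityMeasure ρ] [IsProbabilityMeasure ν]

lemma ProbabilityTheory.IndepFun.map_prodMk_eq_prod (hWV : IndepFun W V μ)
    (hW : μ.map W = ρ) (hV : μ.map V = ν) : μ.map (fun ω => (W ω, V ω)) = ρ.prod ν := by
  subst hW hV
  exact (indepFun_iff_map_prod_eq_prod_map_map' (.of_map_ne_zero (IsProbabilityMeasure.ne_zero _))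
    (.of_map_ne_zero (IsProbabilityMeasure.ne_zero _)) inferInstance inferInstance).mp hWV

lemma ProbabilityTheory.IndepFun.integral_eq_zero_of_integral_right_eq_zero
    (hWV : IndepFun W V μ) (hW : μ.map W = ρ) (hV : μ.map V = ν) {φ : α → β → ℝ}
    (hφ : Integrable (Function.uncurry φ) (ρ.prod ν)) (h0 : ∀ a, ∫ b, φ a b ∂ν = 0) :
    ∫ ω, φ (W ω) (V ω) ∂μ = 0 := by
  have hlaw := hWV.map_prodMk_eq_prod hW hV
  have hWV_meas : AEMeasurable (fun ω => (W ω, V ω)) μ :=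
    .of_map_ne_zero (hlaw ▸ IsProbabilityMeasure.ne_zero _)
  calc ∫ ω, φ (W ω) (V ω) ∂μ = ∫ p, Function.uncurry φ p ∂(ρ.prod ν) := by
        rw [← hlaw, integral_map hWV_meas (hlaw ▸ hφ.aestronglyMeasurable)]
        rfl
    _ = 0 := by simp [integral_prod _ hφ, h0]

end IndependentPairs

lemma measureReal_setOf_lt_eq_le {E : Type*} [MeasurableSpace E] {P : Measure E} {g : E → ℝ}
    {c : ℝ} (h : P {z | g z = c} = 0) : P.real {z | g z < c} = P.real {z | g z ≤ c} := by
  have : {z | g z < c} = {z | g z ≤ c} \ {z | g z = c} := by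
    ext z; simp [lt_iff_le_and_ne]
  rw [this, measureReal_def, measure_sdiff_null h, measureReal_def]

lemma degenerateIndicatorKernel_setOf_lt {E : Type*} [MeasurableSpace E] {PX PY : Measure E}
    [IsProbabilityMeasure PY] {g : E → ℝ} (hg : Measurable g) (hX : ∀ c, PX {z | g z = c} = 0)
    (z z' : E) :
    degenerateIndicatorKernel PX PY {p | g p.1 < g p.2} z z' =
      (if g z < g z' then 1 else 0) - PX.real {w | g w ≤ g z'} + PY.real {w | g w ≤ g z} - 1 +
        (PX.prod PY).real {p | g p.1 < g p.2} := by
  have hY : PY.real {w | g z < g w} = 1 - PY.real {w | g w ≤ g z} := by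
    rw [← probReal_compl_eq_one_sub (measurableSet_le hg measurable_const)]
    congr 1; ext w; simp
  rw [degenerateIndicatorKernel, Set.indicator_apply]
  change (if g z < g z' then _ else _) - PX.real {w | g w < g z'} - PY.real {w | g z < g w} + _ = _
  rw [measureReal_setOf_lt_eq_le (hX _), hY]
  simp only [Pi.one_apply]
  ring

theorem statement10_general {E Ω : Type*} [MeasurableSpace E] [MeasureSpace Ω]
    (PX PY : Measure E) [IsProbabilityMeasure PX] [IsProbabilityMeasure PY]
    (g : E → ℝ) (hg : Measurable g)
    (hatomlessX : ∀ c : ℝ, PX {z | g z = c} = 0)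
    (FX FY : ℝ → ℝ)
    (hFX : FX = fun t => (PX {z | g z ≤ t}).toReal)
    (hFY : FY = fun t => (PY {z | g z ≤ t}).toReal)
    (μs : ℝ) (hμs : μs = ((PX.prod PY) {p | g p.1 < g p.2}).toReal)
    (hdag : E → E → ℝ)
    (hhdag : hdag = fun z z' =>
      (if g z < g z' then (1 : ℝ) else 0) - FX (g z') + FY (g z) - 1 + μs)
    (X₁ X₂ Y₁ Y₂ : Ω → E)
    (hindep : iIndepFun ![X₁, X₂, Y₁, Y₂] ℙ)
    (hlawX₁ : Measure.map X₁ ℙ = PX) (hlawX₂ : Measure.map X₂ ℙ = PX)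
    (hlawY₁ : Measure.map Y₁ ℙ = PY) (hlawY₂ : Measure.map Y₂ ℙ = PY) :
    (∫ ω, hdag (X₁ ω) (Y₁ ω) * hdag (X₁ ω) (Y₂ ω)) = 0 ∧
      (∫ ω, hdag (X₁ ω) (Y₁ ω) * hdag (X₂ ω) (Y₁ ω)) = 0 ∧
      (∫ ω, hdag (X₁ ω) (Y₁ ω) * hdag (X₂ ω) (Y₂ ω)) = 0 := by
  set S : Set (E × E) := {p | g p.1 < g p.2}
  have hS : MeasurableSet S := measurableSet_lt (hg.comp measurable_fst) (hg.comp measurable_snd)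
  obtain rfl : hdag = degenerateIndicatorKernel PX PY S := by
    subst hhdag hFX hFY hμs
    funext z z'
    exact (degenerateIndicatorKernel_setOf_lt hg hatomlessX z z').symm
  have hmeas : ∀ i, AEMeasurable (![X₁, X₂, Y₁, Y₂] i) ℙ := by
    intro i
    fin_cases i <;>
      exact .of_map_ne_zero (by simp [hlawX₁, hlawX₂, hlawY₁, hlawY₂, IsProbabilityMeasure.ne_zero])
  have hlawXY₁ : Measure.map (fun ω => (X₁ ω, Y₁ ω)) ℙ = PX.prod PY :=
    (hindep.indepFun (i := 0) (j := 2) (by decide)).map_prodMk_eq_prod hlawX₁ hlawY₁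
  have hlawXY₂ : Measure.map (fun ω => (X₂ ω, Y₂ ω)) ℙ = PX.prod PY :=
    (hindep.indepFun (i := 1) (j := 3) (by decide)).map_prodMk_eq_prod hlawX₂ hlawY₂
  set K := degenerateIndicatorKernel PX PY S
  refine ⟨?_, ?_, ?_⟩
  · exact (hindep.indepFun_prodMk₀ hmeas 0 2 3 (by decide) (by decide)
      ).integral_eq_zero_of_integral_right_eq_zero hlawXY₁ hlawY₂
      (φ := fun p y => K p.1 p.2 * K p.1 y) (integrable_degenerateIndicatorKernel_mul hS)
      fun p => by simp [K, integral_const_mul, integral_degenerateIndicatorKernel_right hS]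
  · exact (hindep.indepFun_prodMk₀ hmeas 0 2 1 (by decide) (by decide)
      ).integral_eq_zero_of_integral_right_eq_zero hlawXY₁ hlawX₂
      (φ := fun p x => K p.1 p.2 * K x p.2) (integrable_degenerateIndicatorKernel_mul hS)
      fun p => by simp [K, integral_const_mul, integral_degenerateIndicatorKernel_left hS]
  · exact (hindep.indepFun_prodMk_prodMk₀ hmeas 0 2 1 3 (by decide) (by decide) (by decide)
      (by decide)).integral_eq_zero_of_integral_right_eq_zero hlawXY₁ hlawXY₂
      (φ := fun p q => K p.1 p.2 * K q.1 q.2) (integrable_degenerateIndicatorKernel_mul hS)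
      fun p => by simp [K, integral_const_mul, integral_degenerateIndicatorKernel_prod hS]

/-- with `g(Z)` atomless under `P_X` (CDF `F_X`) and under `P_Y`
(CDF `F_Y`), `μ* := P(g(Z_X) < g(Z_Y))`, and kernel
`h†(z,z') := 1{g z < g z'} − F_X(g z') + F_Y(g z) − 1 + μ*`: for mutually
independent `X_1, X_2 ~ P_X` and `Y_1, Y_2 ~ P_Y`,
`E[h†(X_1,Y_1)·h†(X_1,Y_2)] = 0`, `E[h†(X_1,Y_1)·h†(X_2,Y_1)] = 0`, and
`E[h†(X_1,Y_1)·h†(X_2,Y_2)] = 0`. -/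
theorem statement10 {E Ω : Type*} [MeasurableSpace E] [MeasureSpace Ω]
    [IsProbabilityMeasure (ℙ : Measure Ω)]
    (PX PY : Measure E) [IsProbabilityMeasure PX] [IsProbabilityMeasure PY]
    (g : E → ℝ) (hg : Measurable g)
    (hatomlessX : ∀ c : ℝ, PX {z | g z = c} = 0)
    (hatomlessY : ∀ c : ℝ, PY {z | g z = c} = 0)
    (FX FY : ℝ → ℝ)
    (hFX : FX = fun t => (PX {z | g z ≤ t}).toReal)
    (hFY : FY = fun t => (PY {z | g z ≤ t}).toReal)
    (μs : ℝ) (hμs : μs = ((PX.prod PY) {p | g p.1 < g p.2}).toReal)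
    (hdag : E → E → ℝ)
    (hhdag : hdag = fun z z' =>
      (if g z < g z' then (1 : ℝ) else 0) - FX (g z') + FY (g z) - 1 + μs)
    (X₁ X₂ Y₁ Y₂ : Ω → E)
    (hX₁ : Measurable X₁) (hX₂ : Measurable X₂)
    (hY₁ : Measurable Y₁) (hY₂ : Measurable Y₂)
    (hindep : iIndepFun ![X₁, X₂, Y₁, Y₂] ℙ)
    (hlawX₁ : Measure.map X₁ ℙ = PX) (hlawX₂ : Measure.map X₂ ℙ = PX)
    (hlawY₁ : Measure.map Y₁ ℙ = PY) (hlawY₂ : Measure.map Y₂ ℙ = PY) :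
    (∫ ω, hdag (X₁ ω) (Y₁ ω) * hdag (X₁ ω) (Y₂ ω)) = 0 ∧
      (∫ ω, hdag (X₁ ω) (Y₁ ω) * hdag (X₂ ω) (Y₁ ω)) = 0 ∧
      (∫ ω, hdag (X₁ ω) (Y₁ ω) * hdag (X₂ ω) (Y₂ ω)) = 0 :=
  statement10_general PX PY g hg hatomlessX FX FY hFX hFY μs hμs hdag hhdag X₁ X₂ Y₁ Y₂ hindep
    hlawX₁ hlawX₂ hlawY₁ hlawY₂
end

section
/- Let P be a probability measure on a measurable space (E, ℰ) and g : E → ℝ a measurable function such that g(Z) has a continuous (atomless) distribution with cumulative distribution function F when Z ~ P, and define h⁰(z, z') := 1{ g(z) < g(z') } − F(g(z')) + F(g(z)) − 1/2. Let Z_1, …, Z_n be independent and each distributed according to P, and let A and B be disjoint subsets of {1, …, n}. Then E[ ( Σ_{i ∈ A} Σ_{j ∈ B} h⁰(Z_i, Z_j) )² ] = Σ_{i ∈ A} Σ_{j ∈ B} E[ h⁰(Z_i, Z_j)² ], and in particular this second moment is at most 16·|A|·|B|. -/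
/-!
The kernel `h⁰` is degenerate: it integrates to zero in each argument separately. Both
directions rest on `∫ F(g z) dP(z) = 1/2`, which holds because `(P ⊗ P){g z' ≤ g z}` equals its
mirror image and the diagonal `{g z = g z'}` is null; integrating out the first argument also
uses `P(g < t) = P(g ≤ t)`. In the expansion of the square, a cross term
`h⁰(Z_i, Z_j) h⁰(Z_i', Z_j')` with `(i, j) ≠ (i', j')`, `i, i' ∈ A`, `j, j' ∈ B` has an index
occurring exactly once, and integrating out that independent variable kills it. The remaining
diagonal terms are at most `(3/2)²`, since `|h⁰| ≤ 3/2`.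
-/

open MeasureTheory ProbabilityTheory Function

theorem integral_measureReal_Iic_self (μ : Measure ℝ) [IsProbabilityMeasure μ]
    [NullSingletonClass μ] : ∫ x, μ.real (Set.Iic x) ∂μ = 1 / 2 := by
  have hS : MeasurableSet {p : ℝ × ℝ | p.2 ≤ p.1} := measurableSet_le measurable_snd measurable_fst
  have hT : MeasurableSet {p : ℝ × ℝ | p.1 ≤ p.2} := measurableSet_le measurable_fst measurable_snd
  have hdiag : μ.prod μ {p : ℝ × ℝ | p.2 = p.1} = 0 := by
    rw [Measure.prod_apply (measurableSet_eq_fun measurable_snd measurable_fst)]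
    simp [Set.preimage, eq_comm]
  have hswap : μ.prod μ {p : ℝ × ℝ | p.1 ≤ p.2} = μ.prod μ {p : ℝ × ℝ | p.2 ≤ p.1} := by
    conv_lhs => rw [← Measure.prod_swap, Measure.map_apply measurable_swap hT]
    rfl
  have htwice : μ.prod μ {p : ℝ × ℝ | p.2 ≤ p.1} + μ.prod μ {p : ℝ × ℝ | p.2 ≤ p.1} = 1 := by
    have := measure_union_add_inter {p : ℝ × ℝ | p.2 ≤ p.1} hT (μ := μ.prod μ)
    rw [← Set.ofPred_or, ← Set.ofPred_and] at this
    simpa only [le_total, Set.ofPred_true, measure_univ, ← le_antisymm_iff, hdiag, add_zero,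
      hswap] using this.symm
  have hν : ∫ x, μ.real (Set.Iic x) ∂μ = (μ.prod μ).real {p : ℝ × ℝ | p.2 ≤ p.1} := by
    simp only [measureReal_def]
    rw [Measure.prod_apply hS, integral_toReal]
    · rfl
    · exact (measurable_measure_prodMk_left hS).aemeasurable
    · exact ae_of_all _ fun _ => measure_lt_top _ _
  have := congrArg ENNReal.toReal htwice
  rw [ENNReal.toReal_add (measure_ne_top _ _) (measure_ne_top _ _), ENNReal.toReal_one] at this
  rw [hν, measureReal_def]
  linarith

theorem integral_ite_one_zero {α : Type*} [MeasurableSpace α] {μ : Measure α} {p : α → Prop}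
    [DecidablePred p] (hp : MeasurableSet {x | p x}) :
    ∫ x, (if p x then (1 : ℝ) else 0) ∂μ = μ.real {x | p x} := by
  rw [← integral_indicator_one hp]
  congr with x
  simp [Set.indicator_apply]

theorem integrable_ite_one_zero {α : Type*} [MeasurableSpace α] {μ : Measure α}
    [IsFiniteMeasure μ] {p : α → Prop} [DecidablePred p] (hp : MeasurableSet {x | p x}) :
    Integrable (fun x => if p x then (1 : ℝ) else 0) μ := by
  have : (fun x => if p x then (1 : ℝ) else 0) = {x | p x}.indicator 1 := by
    ext x; simp [Set.indicator_apply]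
  rw [this]
  exact (integrable_const 1).indicator hp

noncomputable def rankKernel {E : Type*} [MeasurableSpace E] (P : Measure E) (g : E → ℝ)
    (z z' : E) : ℝ :=
  (if g z < g z' then 1 else 0) - P.real {w | g w ≤ g z'} + P.real {w | g w ≤ g z} - 1 / 2

section rankKernel

variable {E : Type*} [MeasurableSpace E] {P : Measure E} {g : E → ℝ}

theorem measurable_measureReal_setOf_le [IsFiniteMeasure P] :
    Measurable fun t => P.real {w | g w ≤ t} :=
  Monotone.measurable fun _ _ hst => measureReal_mono fun _ hw => le_trans hw hst

theorem measurable_uncurry_rankKernel [IsFiniteMeasure P] (hg : Measurable g) :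
    Measurable (uncurry (rankKernel P g)) := by
  have hlt : MeasurableSet {p : E × E | g p.1 < g p.2} :=
    measurableSet_lt (hg.comp measurable_fst) (hg.comp measurable_snd)
  unfold rankKernel uncurry
  exact (((Measurable.ite hlt measurable_const measurable_const).sub
    (measurable_measureReal_setOf_le.comp (hg.comp measurable_snd))).add
    (measurable_measureReal_setOf_le.comp (hg.comp measurable_fst))).sub measurable_const

theorem integrable_measureReal_setOf_le_comp [IsFiniteMeasure P] (hg : Measurable g) :
    Integrable (fun z => P.real {w | g w ≤ g z}) P :=
  Integrable.of_bound (measurable_measureReal_setOf_le.comp hg).aestronglyMeasurable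
    (P.real Set.univ) (ae_of_all _ fun _ => by
      rw [Real.norm_of_nonneg measureReal_nonneg]; exact measureReal_mono (Set.subset_univ _))

theorem abs_rankKernel_le [IsProbabilityMeasure P] (z z' : E) :
    |rankKernel P g z z'| ≤ 3 / 2 := by
  have h₁ : P.real {w | g w ≤ g z} ≤ 1 := measureReal_le_one
  have h₂ : P.real {w | g w ≤ g z'} ≤ 1 := measureReal_le_one
  have h₃ : 0 ≤ P.real {w | g w ≤ g z} := measureReal_nonneg
  have h₄ : 0 ≤ P.real {w | g w ≤ g z'} := measureReal_nonneg
  unfold rankKernel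
  split_ifs <;> rw [abs_le] <;> constructor <;> linarith

variable (hg : Measurable g) (hatomless : ∀ c, P {z | g z = c} = 0)
include hg hatomless

theorem measureReal_setOf_lt_eq_le_s12 (t : ℝ) : P.real {w | g w < t} = P.real {w | g w ≤ t} := by
  have hnull : P.map g {t} = 0 := by
    rw [Measure.map_apply hg (measurableSet_singleton t)]
    exact hatomless t
  calc P.real {w | g w < t} = (P.map g).real (Set.Iio t) :=
        (map_measureReal_apply hg measurableSet_Iio).symm
    _ = (P.map g).real (Set.Iic t) := measureReal_congr (Iio_ae_eq_Iic' hnull)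
    _ = P.real {w | g w ≤ t} := map_measureReal_apply hg measurableSet_Iic

variable [IsProbabilityMeasure P]

theorem integral_measureReal_setOf_le_comp : ∫ z, P.real {w | g w ≤ g z} ∂P = 1 / 2 := by
  have : IsProbabilityMeasure (P.map g) := Measure.isProbabilityMeasure_map hg.aemeasurable
  have : NullSingletonClass (P.map g) := ⟨fun t => by
    rw [Measure.map_apply hg (measurableSet_singleton t)]
    exact hatomless t⟩
  have := integral_measureReal_Iic_self (P.map g)
  simp_rw [map_measureReal_apply hg measurableSet_Iic] at this
  exact (integral_map (f := fun t => P.real {w | g w ≤ t}) hg.aemeasurable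
    measurable_measureReal_setOf_le.aestronglyMeasurable).symm.trans this

theorem integral_rankKernel_snd_eq_zero (z : E) :
    ∫ z', rankKernel P g z z' ∂P = 0 := by
  have hs : MeasurableSet {z' | g z < g z'} := measurableSet_lt measurable_const hg
  have hite := integral_ite_one_zero (μ := P) hs
  have hcompl : P.real {z' | g z < g z'} = 1 - P.real {w | g w ≤ g z} := by
    rw [← probReal_compl_eq_one_sub (measurableSet_le hg measurable_const)]
    congr 1; ext; simp
  have hi := integrable_ite_one_zero (μ := P) hs
  have hF := integrable_measureReal_setOf_le_comp (P := P) hg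
  unfold rankKernel
  rw [integral_sub, integral_add, integral_sub hi hF, hite, hcompl,
    integral_measureReal_setOf_le_comp hg hatomless]
  · simp only [integral_const, probReal_univ, smul_eq_mul, one_mul]
    ring
  exacts [hi.sub hF, integrable_const _, (hi.sub hF).add (integrable_const _),
    integrable_const _]

theorem integral_rankKernel_fst_eq_zero (z' : E) :
    ∫ z, rankKernel P g z z' ∂P = 0 := by
  have hs : MeasurableSet {z | g z < g z'} := measurableSet_lt hg measurable_const
  have hite := integral_ite_one_zero (μ := P) hs
  have hi := integrable_ite_one_zero (μ := P) hs
  have hF := integrable_measureReal_setOf_le_comp (P := P) hg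
  unfold rankKernel
  rw [integral_sub, integral_add, integral_sub hi (integrable_const _), hite,
    measureReal_setOf_lt_eq_le_s12 hg hatomless, integral_measureReal_setOf_le_comp hg hatomless]
  · simp only [integral_const, probReal_univ, smul_eq_mul, one_mul]
    ring
  exacts [hi.sub (integrable_const _), hF, (hi.sub (integrable_const _)).add hF,
    integrable_const _]

end rankKernel

section Moments

variable {Ω : Type*} [MeasurableSpace Ω] {μ : Measure Ω}

theorem ProbabilityTheory.IndepFun.integral_comp_eq_zero_of_integral_fst {E E' : Type*}
    [MeasurableSpace E] [MeasurableSpace E'] [IsFiniteMeasure μ] {X : Ω → E} {Y : Ω → E'}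
    (hXY : IndepFun X Y μ) (hX : Measurable X) (hY : Measurable Y) {f : E × E' → ℝ}
    (hf : Measurable f) (hfi : Integrable (fun ω => f (X ω, Y ω)) μ)
    (hzero : ∀ y, ∫ x, f (x, y) ∂(μ.map X) = 0) :
    ∫ ω, f (X ω, Y ω) ∂μ = 0 := by
  have hlaw := (indepFun_iff_map_prod_eq_prod_map_map hX.aemeasurable hY.aemeasurable).1 hXY
  have hXYm : AEMeasurable (fun ω => (X ω, Y ω)) μ := (hX.prodMk hY).aemeasurable
  have hfi' : Integrable f ((μ.map X).prod (μ.map Y)) := by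
    rw [← hlaw]; exact (integrable_map_measure hf.aestronglyMeasurable hXYm).2 hfi
  rw [← integral_map hXYm hf.aestronglyMeasurable, hlaw, integral_prod_symm f hfi']
  simp [hzero]

theorem integral_sq_sum_of_orthogonal {κ : Type*} {s : Finset κ} {X : κ → Ω → ℝ}
    (hX : ∀ p ∈ s, MemLp (X p) 2 μ)
    (horth : ∀ p ∈ s, ∀ q ∈ s, p ≠ q → ∫ ω, X p ω * X q ω ∂μ = 0) :
    ∫ ω, (∑ p ∈ s, X p ω) ^ 2 ∂μ = ∑ p ∈ s, ∫ ω, X p ω ^ 2 ∂μ := by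
  have hint : ∀ p ∈ s, ∀ q ∈ s, Integrable (fun ω => X p ω * X q ω) μ :=
    fun p hp q hq => (hX p hp).integrable_mul (hX q hq)
  simp_rw [sq, Finset.sum_mul_sum]
  rw [integral_finsetSum _ fun p hp => integrable_finsetSum _ fun q hq => hint p hp q hq]
  refine Finset.sum_congr rfl fun p hp => ?_
  rw [integral_finsetSum _ fun q hq => hint p hp q hq,
    Finset.sum_eq_single_of_mem p hp fun q hq hqp => horth p hp q hq hqp.symm]

theorem integral_sq_le_sq_of_abs_le [IsProbabilityMeasure μ] {f : Ω → ℝ} {C : ℝ}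
    (hf : ∀ x, |f x| ≤ C) : ∫ x, f x ^ 2 ∂μ ≤ C ^ 2 := by
  have hbound : ∀ x, ‖f x ^ 2‖ ≤ C ^ 2 := fun x => by
    rw [Real.norm_eq_abs, abs_pow]
    exact pow_le_pow_left₀ (abs_nonneg _) (hf x) 2
  simpa using (le_abs_self _).trans (norm_integral_le_of_norm_le_const (ae_of_all μ hbound))

end Moments

section DegenerateKernel

variable {Ω ι E : Type*} [MeasurableSpace Ω] [MeasurableSpace E] {μ : Measure Ω}
  [IsFiniteMeasure μ] {P : Measure E} {Z : ι → Ω → E}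

theorem memLp_kernel_comp {k : E → E → ℝ} (hk : Measurable (uncurry k))
    {C : ℝ} (hC : ∀ z w, |k z w| ≤ C) {X Y : Ω → E} (hX : Measurable X) (hY : Measurable Y)
    (p : ENNReal) : MemLp (fun ω => k (X ω) (Y ω)) p μ :=
  MemLp.of_bound (hk.comp (hX.prodMk hY)).aestronglyMeasurable C (ae_of_all _ fun _ => hC _ _)

variable (hZ : ∀ i, Measurable (Z i)) (hindep : iIndepFun Z μ) (hlaw : ∀ i, μ.map (Z i) = P)
include hZ hindep hlaw

theorem integral_kernel_mul_eq_zero {k l : E → E → ℝ} (hk : Measurable (uncurry k))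
    (hl : Measurable (uncurry l)) {C D : ℝ} (hkC : ∀ z w, |k z w| ≤ C)
    (hlD : ∀ z w, |l z w| ≤ D) (hk0 : ∀ w, ∫ z, k z w ∂P = 0) {i j i' j' : ι}
    (hij : i ≠ j) (hii' : i ≠ i') (hij' : i ≠ j') :
    ∫ ω, k (Z i ω) (Z j ω) * l (Z i' ω) (Z j' ω) ∂μ = 0 := by
  classical
  have hind : IndepFun (Z i) (fun ω => (Z j ω, Z i' ω, Z j' ω)) μ :=
    (hindep.indepFun_finset {i} {j, i', j'} (by simp [hij, hii', hij']) hZ).comp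
      (measurable_pi_apply (⟨i, Finset.mem_singleton_self i⟩ : ({i} : Finset ι)))
      (ψ := fun y : ({j, i', j'} : Finset ι) → E =>
        (y ⟨j, by simp⟩, y ⟨i', by simp⟩, y ⟨j', by simp⟩)) (by fun_prop)
  refine hind.integral_comp_eq_zero_of_integral_fst (hZ i) (by fun_prop)
    (f := fun p => k p.1 p.2.1 * l p.2.2.1 p.2.2.2) ?_ ?_ fun y => ?_
  · exact (hk.comp (measurable_fst.prodMk (measurable_fst.comp measurable_snd))).mul
      (hl.comp measurable_snd.snd)
  · exact (memLp_kernel_comp hk hkC (hZ i) (hZ j) 2).integrable_mul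
      (memLp_kernel_comp hl hlD (hZ i') (hZ j') 2)
  · simp only [hlaw i, integral_mul_const, hk0, zero_mul]

theorem integral_sq_sum_kernel_eq_sum_integral_sq {k : E → E → ℝ} (hk : Measurable (uncurry k))
    {C : ℝ} (hC : ∀ z w, |k z w| ≤ C) (hk_fst : ∀ w, ∫ z, k z w ∂P = 0)
    (hk_snd : ∀ z, ∫ w, k z w ∂P = 0) {A B : Finset ι} (hAB : Disjoint A B) :
    ∫ ω, (∑ i ∈ A, ∑ j ∈ B, k (Z i ω) (Z j ω)) ^ 2 ∂μ =
      ∑ i ∈ A, ∑ j ∈ B, ∫ ω, k (Z i ω) (Z j ω) ^ 2 ∂μ := by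
  have hne {a b : ι} (ha : a ∈ A) (hb : b ∈ B) : a ≠ b :=
    fun hab => Finset.disjoint_left.1 hAB ha (hab ▸ hb)
  simp_rw [← Finset.sum_product' A B]
  refine integral_sq_sum_of_orthogonal (X := fun (p : ι × ι) ω => k (Z p.1 ω) (Z p.2 ω))
    (fun p _ => memLp_kernel_comp hk hC (hZ _) (hZ _) 2) ?_
  rintro ⟨i, j⟩ hp ⟨i', j'⟩ hq hpq
  simp only [Finset.mem_product] at hp hq
  by_cases hii' : i = i'
  · subst hii'
    have hjj' : j ≠ j' := fun h => hpq (by rw [h])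
    -- `j` occurs only once; swapping the arguments of `k` moves it to the front
    exact integral_kernel_mul_eq_zero hZ hindep hlaw (k := swap k) (l := swap k)
      (hk.comp measurable_swap) (hk.comp measurable_swap) (fun _ _ => hC _ _) (fun _ _ => hC _ _)
      hk_snd (hne hp.1 hp.2).symm hjj' (hne hq.1 hp.2).symm
  · exact integral_kernel_mul_eq_zero hZ hindep hlaw hk hk hC hC hk_fst (hne hp.1 hp.2) hii'
      (hne hp.1 hq.2)

end DegenerateKernel

/-- with `g(Z)` atomless under `P` with CDF `F`, kernel
`h⁰(z,z') := 1{g z < g z'} − F(g z') + F(g z) − 1/2`, i.i.d. `Z_1, …, Z_n ~ P`,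
and disjoint index sets `A, B`:
`E[(Σ_{i∈A} Σ_{j∈B} h⁰(Z_i,Z_j))²] = Σ_{i∈A} Σ_{j∈B} E[h⁰(Z_i,Z_j)²] ≤ 16·|A|·|B|`. -/
theorem statement12 {E Ω : Type*} [MeasurableSpace E] [MeasureSpace Ω]
    [IsProbabilityMeasure (ℙ : Measure Ω)]
    (P : Measure E) [IsProbabilityMeasure P]
    (g : E → ℝ) (hg : Measurable g)
    (hatomless : ∀ c : ℝ, P {z | g z = c} = 0)
    (F : ℝ → ℝ) (hF : F = fun t => (P {z | g z ≤ t}).toReal)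
    (h0 : E → E → ℝ)
    (hh0 : h0 = fun z z' =>
      (if g z < g z' then (1 : ℝ) else 0) - F (g z') + F (g z) - 1 / 2)
    (n : ℕ) (Z : Fin n → Ω → E)
    (hZmeas : ∀ t, Measurable (Z t))
    (hindep : iIndepFun Z ℙ)
    (hlaw : ∀ t, Measure.map (Z t) ℙ = P)
    (A B : Finset (Fin n)) (hAB : Disjoint A B) :
    (∫ ω, (∑ i ∈ A, ∑ j ∈ B, h0 (Z i ω) (Z j ω)) ^ 2) =
        (∑ i ∈ A, ∑ j ∈ B, ∫ ω, (h0 (Z i ω) (Z j ω)) ^ 2) ∧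
      (∫ ω, (∑ i ∈ A, ∑ j ∈ B, h0 (Z i ω) (Z j ω)) ^ 2) ≤
        16 * (A.card : ℝ) * (B.card : ℝ) := by
  obtain rfl : h0 = rankKernel P g := by subst hF hh0; rfl
  have horth := integral_sq_sum_kernel_eq_sum_integral_sq hZmeas hindep hlaw
    (measurable_uncurry_rankKernel hg) abs_rankKernel_le
    (integral_rankKernel_fst_eq_zero hg hatomless) (integral_rankKernel_snd_eq_zero hg hatomless)
    hAB
  refine ⟨horth, ?_⟩
  calc _ = ∑ i ∈ A, ∑ j ∈ B, ∫ ω, rankKernel P g (Z i ω) (Z j ω) ^ 2 := horth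
    _ ≤ ∑ _i ∈ A, ∑ _j ∈ B, (3 / 2 : ℝ) ^ 2 :=
      Finset.sum_le_sum fun _ _ => Finset.sum_le_sum fun _ _ =>
        integral_sq_le_sq_of_abs_le fun _ => abs_rankKernel_le _ _
    _ ≤ 16 * (A.card : ℝ) * (B.card : ℝ) := by
      simp only [Finset.sum_const, nsmul_eq_mul]
      nlinarith [mul_nonneg (Nat.cast_nonneg (α := ℝ) A.card) (Nat.cast_nonneg (α := ℝ) B.card)]
end

section
/- Fix ε ∈ (0, 1/2), η ∈ (0, 1/2 − ε), and τ ∈ [ε + η, 1 − ε − η]. For each T, let P_{X,T} and P_{Y,T} be probability measures on a measurable space (E, ℰ) with P_{Y,T} ≪ P_{X,T} and L_T := dP_{Y,T}/dP_{X,T}; let θ̂_T : E → ℝ be measurable with θ̂_T(Z) having an atomless distribution both under P_{X,T} and under P_{Y,T}; and let Z_1, …, Z_T be independent with Z_t ~ P_{X,T} for t ≤ t_0 := ⌊τT⌋ and Z_t ~ P_{Y,T} for t > t_0. Set m := ⌊Tε⌋, I_cp := { ⌊Tr⌋ : r ∈ [ε+η, 1−ε−η] }, and Ψ̂(k) :=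 ((k−m)(T−m−k))^{−1} Σ_{i=m+1}^{k} Σ_{j=k+1}^{T−m} 1{ θ̂_T(Z_i) < θ̂_T(Z_j) }. Define δ_T := E| L_T(Z) − L_T(Z') | for independent Z, Z' ~ P_{X,T}, μ_T := 1/2 + δ_T/4, and μ_{*,T} := P( θ̂_T(Z_X) < θ̂_T(Z_Y) ) for independent Z_X ~ P_{X,T}, Z_Y ~ P_{Y,T}. Suppose there are positive reals c_T with √T · c_T → ∞, c_T < δ_T/4, and | μ_{*,T} − μ_T | ≤ δ_T/4 − c_T for all large T, and suppose √T · δ_T → ∞. Then sup_{k ∈ I_cp} √T · ( Ψ̂(k) − 1/2 ) → ∞ in probability as T → ∞. -/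
/-!
At the true change point `t₀ = ⌊τT⌋ ∈ I_cp` the statistic `Ψ̂(t₀)` is the mean of a two-sample
U-statistic whose kernel `1{θ x < θ y}` has mean `μ⋆`, and `μ⋆ ≥ 1/2 + c_T` because
`|μ⋆ - (1/2 + δ_T/4)| ≤ δ_T/4 - c_T`.
Expanding the square of the centred sum, a pair of index pairs with no common coordinate
contributes nothing (independence and centring), so the variance of `Ψ̂(t₀)` is at most
`1/(t₀ - m) + 1/(T - m - t₀) ≤ 4/(ηT)`. Chebyshev's inequality then bounds
`P(√T (Ψ̂(t₀) - 1/2) ≤ M)` by `4 / (η (√T c_T - M)²) → 0`.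
-/

open MeasureTheory ProbabilityTheory Filter Finset

section TwoSampleUStatistic

variable {Ω ι E : Type*} [MeasurableSpace Ω] [MeasurableSpace E] {μ : Measure Ω}
  {Z : ι → Ω → E} {S : Set ι} {h : E × E → ℝ}

lemma integral_kernel_mul_kernel_eq_zero (hZ : ∀ i, Measurable (Z i))
    (hind : iIndepFun (fun t : S => Z t) μ) (hh : Measurable h) {i j i' j' : ι}
    (hi : i ∈ S) (hj : j ∈ S) (hi' : i' ∈ S) (hj' : j' ∈ S)
    (hii' : i ≠ i') (hij' : i ≠ j') (hji' : j ≠ i') (hjj' : j ≠ j')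
    (hcent : ∫ ω, h (Z i ω, Z j ω) ∂μ = 0) :
    ∫ ω, h (Z i ω, Z j ω) * h (Z i' ω, Z j' ω) ∂μ = 0 := by
  have hpair := (hind.indepFun_prodMk_prodMk (fun t => hZ t) ⟨i, hi⟩ ⟨j, hj⟩ ⟨i', hi'⟩
    ⟨j', hj'⟩ (by simpa using hii') (by simpa using hij') (by simpa using hji')
    (by simpa using hjj')).comp hh hh
  have hmeas : ∀ a b : ι, Measurable fun ω => h (Z a ω, Z b ω) := fun a b =>
    hh.comp ((hZ a).prodMk (hZ b))
  exact (hpair.integral_mul_eq_mul_integral (hmeas i j).aestronglyMeasurable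
    (hmeas i' j').aestronglyMeasurable).trans
    (by simp only [Function.comp_def, hcent, zero_mul])

lemma card_filter_share_coord_le [DecidableEq ι] (A B : Finset ι) (p : ι × ι) :
    #{q ∈ A ×ˢ B | p.1 = q.1 ∨ p.2 = q.2} ≤ #A + #B := by
  have hsub : {q ∈ A ×ˢ B | p.1 = q.1 ∨ p.2 = q.2} ⊆ A ×ˢ {p.2} ∪ {p.1} ×ˢ B := by
    intro q hq
    simp only [mem_filter, mem_product] at hq
    rcases hq with ⟨⟨hqA, hqB⟩, h1 | h2⟩
    · exact mem_union_right _ (mem_product.2 ⟨mem_singleton.2 h1.symm, hqB⟩)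
    · exact mem_union_left _ (mem_product.2 ⟨hqA, mem_singleton.2 h2.symm⟩)
  calc _ ≤ #(A ×ˢ {p.2} ∪ {p.1} ×ˢ B) := card_le_card hsub
    _ ≤ #(A ×ˢ {p.2}) + #({p.1} ×ˢ B) := card_union_le _ _
    _ = #A + #B := by simp only [card_product, card_singleton, mul_one, one_mul]

variable [IsProbabilityMeasure μ] {A B : Finset ι}

lemma integral_sq_sum_kernel_le (hZ : ∀ i, Measurable (Z i))
    (hind : iIndepFun (fun t : S => Z t) μ) (hh : Measurable h) (hbd : ∀ p, |h p| ≤ 1)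
    (hAS : ↑A ⊆ S) (hBS : ↑B ⊆ S) (hAB : Disjoint A B)
    (hcent : ∀ i ∈ A, ∀ j ∈ B, ∫ ω, h (Z i ω, Z j ω) ∂μ = 0) :
    ∫ ω, (∑ i ∈ A, ∑ j ∈ B, h (Z i ω, Z j ω)) ^ 2 ∂μ ≤ #A * #B * (#A + #B) := by
  classical
  set H : ι × ι → Ω → ℝ := fun p ω => h (Z p.1 ω, Z p.2 ω)
  have hHbd : ∀ p q ω, |H p ω * H q ω| ≤ 1 := fun p q ω => by
    rw [abs_mul]; exact mul_le_one₀ (hbd _) (abs_nonneg _) (hbd _)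
  have hHint : ∀ p q, Integrable (fun ω => H p ω * H q ω) μ := fun p q =>
    Integrable.of_bound (((hh.comp ((hZ _).prodMk (hZ _))).mul
      (hh.comp ((hZ _).prodMk (hZ _)))).aestronglyMeasurable) 1
      (Eventually.of_forall (hHbd p q))
  have hterm : ∀ p ∈ A ×ˢ B, ∀ q ∈ A ×ˢ B,
      ∫ ω, H p ω * H q ω ∂μ ≤ if p.1 = q.1 ∨ p.2 = q.2 then 1 else 0 := by
    intro p hp q hq
    rw [mem_product] at hp hq
    split_ifs with hshare
    · have := norm_integral_le_of_norm_le_const (μ := μ) (C := 1)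
        (f := fun ω => H p ω * H q ω) (Eventually.of_forall (hHbd p q))
      simp only [Real.norm_eq_abs, probReal_univ, mul_one] at this
      exact (le_abs_self _).trans this
    · push Not at hshare
      exact (integral_kernel_mul_kernel_eq_zero hZ hind hh (hAS hp.1) (hBS hp.2) (hAS hq.1)
        (hBS hq.2) hshare.1 (disjoint_left.1 hAB hp.1 <| · ▸ hq.2)
        (fun e => disjoint_left.1 hAB hq.1 (e ▸ hp.2)) hshare.2 (hcent _ hp.1 _ hp.2)).le
  calc ∫ ω, (∑ i ∈ A, ∑ j ∈ B, h (Z i ω, Z j ω)) ^ 2 ∂μ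
      = ∑ p ∈ A ×ˢ B, ∑ q ∈ A ×ˢ B, ∫ ω, H p ω * H q ω ∂μ := by
        simp_rw [← sum_product' A B (fun i j => h (Z i _, Z j _)), sq, sum_mul_sum]
        rw [integral_finsetSum _ fun p _ => integrable_finsetSum _ fun q _ => hHint p q]
        exact sum_congr rfl fun p _ => integral_finsetSum _ fun q _ => hHint p q
    _ ≤ ∑ p ∈ A ×ˢ B, ∑ q ∈ A ×ˢ B, if p.1 = q.1 ∨ p.2 = q.2 then (1 : ℝ) else 0 :=
        sum_le_sum fun p hp => sum_le_sum fun q hq => hterm p hp q hq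
    _ ≤ ∑ _p ∈ A ×ˢ B, ((#A : ℝ) + #B) := sum_le_sum fun p _ => by
        rw [sum_boole]; exact_mod_cast card_filter_share_coord_le A B p
    _ = #A * #B * (#A + #B) := by
        simp only [sum_const, card_product, nsmul_eq_mul]; push_cast; ring

lemma measure_le_abs_mean_kernel_le (hZ : ∀ i, Measurable (Z i))
    (hind : iIndepFun (fun t : S => Z t) μ) (hh : Measurable h) (hbd : ∀ p, |h p| ≤ 1)
    (hAS : ↑A ⊆ S) (hBS : ↑B ⊆ S) (hAB : Disjoint A B)
    (hcent : ∀ i ∈ A, ∀ j ∈ B, ∫ ω, h (Z i ω, Z j ω) ∂μ = 0) {a : ℝ} (ha : 0 < a) :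
    μ {ω | a ≤ |((#A : ℝ) * #B)⁻¹ * ∑ i ∈ A, ∑ j ∈ B, h (Z i ω, Z j ω)|}
      ≤ ENNReal.ofReal (((#A : ℝ)⁻¹ + (#B : ℝ)⁻¹) / a ^ 2) := by
  set f : Ω → ℝ := fun ω => (((#A : ℝ) * #B)⁻¹ * ∑ i ∈ A, ∑ j ∈ B, h (Z i ω, Z j ω)) ^ 2
  have hmeas : Measurable fun ω => ∑ i ∈ A, ∑ j ∈ B, h (Z i ω, Z j ω) :=
    Finset.measurable_sum _ fun i _ => Finset.measurable_sum _ fun j _ =>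
      hh.comp ((hZ i).prodMk (hZ j))
  have hsum_bd : ∀ ω, |∑ i ∈ A, ∑ j ∈ B, h (Z i ω, Z j ω)| ≤ #A * #B := fun ω => by
    calc _ ≤ ∑ i ∈ A, ∑ j ∈ B, (1 : ℝ) :=
          (abs_sum_le_sum_abs _ _).trans (sum_le_sum fun i _ =>
            (abs_sum_le_sum_abs _ _).trans (sum_le_sum fun j _ => hbd _))
      _ = #A * #B := by simp
  have hfint : Integrable f μ := by
    refine Integrable.of_bound ((hmeas.const_mul _).pow_const 2).aestronglyMeasurable
      ((((#A : ℝ) * #B)⁻¹ * (#A * #B)) ^ 2) (Eventually.of_forall fun ω => ?_)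
    rw [Real.norm_eq_abs, abs_pow, abs_mul, abs_of_nonneg (by positivity)]
    gcongr
    exact hsum_bd ω
  have hmoment : ∫ ω, f ω ∂μ ≤ (#A : ℝ)⁻¹ + (#B : ℝ)⁻¹ := by
    calc ∫ ω, f ω ∂μ
        = ((#A : ℝ) * #B)⁻¹ ^ 2 * ∫ ω, (∑ i ∈ A, ∑ j ∈ B, h (Z i ω, Z j ω)) ^ 2 ∂μ := by
          simp_rw [f, mul_pow]; exact integral_const_mul _ _
      _ ≤ ((#A : ℝ) * #B)⁻¹ ^ 2 * (#A * #B * (#A + #B)) := by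
          gcongr; exact integral_sq_sum_kernel_le hZ hind hh hbd hAS hBS hAB hcent
      _ ≤ (#A : ℝ)⁻¹ + (#B : ℝ)⁻¹ := by
          rcases eq_or_ne (#A) 0 with hA | hA
          · simp [hA]
          rcases eq_or_ne (#B) 0 with hB | hB
          · simp [hB]
          field_simp
          linarith
  have hsub : {ω | a ≤ |((#A : ℝ) * #B)⁻¹ * ∑ i ∈ A, ∑ j ∈ B, h (Z i ω, Z j ω)|}
      ⊆ {ω | a ^ 2 ≤ f ω} := fun ω hω => by
    simpa only [Set.mem_ofPred_eq, f, sq_abs] using pow_le_pow_left₀ ha.le hω 2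
  refine (measure_mono hsub).trans ?_
  rw [← ofReal_measureReal]
  refine ENNReal.ofReal_le_ofReal ((le_div_iff₀ (by positivity)).2 ?_)
  rw [mul_comm]
  exact (mul_meas_ge_le_integral_of_nonneg (Eventually.of_forall fun ω => sq_nonneg _)
    hfint _).trans hmoment

end TwoSampleUStatistic

section AUC

variable {Ω E : Type*} [MeasurableSpace Ω] [MeasurableSpace E] {μ : Measure Ω}
  [IsProbabilityMeasure μ] {PX PY : Measure E} {θ : E → ℝ} {Z : ℕ → Ω → E} {T m k : ℕ}

lemma map_pair_eq_prod (hZ : ∀ t, Measurable (Z t))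
    (hind : iIndepFun (fun t : Set.Icc 1 T => Z t) μ)
    (hlawX : ∀ t, 1 ≤ t → t ≤ k → μ.map (Z t) = PX)
    (hlawY : ∀ t, k < t → t ≤ T → μ.map (Z t) = PY)
    {i j : ℕ} (hi : 1 ≤ i) (hik : i ≤ k) (hkj : k < j) (hj : j ≤ T) :
    μ.map (fun ω => (Z i ω, Z j ω)) = PX.prod PY := by
  have hij : IndepFun (Z i) (Z j) μ :=
    hind.indepFun (i := ⟨i, hi, by omega⟩) (j := ⟨j, by omega, hj⟩)
      (Subtype.coe_ne_coe.1 (show i ≠ j by omega))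
  rw [(indepFun_iff_map_prod_eq_prod_map_map (hZ i).aemeasurable (hZ j).aemeasurable).1 hij,
    hlawX i hi hik, hlawY j hkj hj]

variable [IsProbabilityMeasure PX] [IsProbabilityMeasure PY]

lemma measure_le_abs_auc_sub_le (hθ : Measurable θ) (hZ : ∀ t, Measurable (Z t))
    (hind : iIndepFun (fun t : Set.Icc 1 T => Z t) μ)
    (hlawX : ∀ t, 1 ≤ t → t ≤ k → μ.map (Z t) = PX)
    (hlawY : ∀ t, k < t → t ≤ T → μ.map (Z t) = PY)
    (hmk : m < k) (hkT : k < T - m) {a : ℝ} (ha : 0 < a) :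
    μ {ω | a ≤ |(((k : ℝ) - m) * ((T : ℝ) - m - k))⁻¹ *
        ∑ i ∈ Ioc m k, ∑ j ∈ Ioc k (T - m), (if θ (Z i ω) < θ (Z j ω) then (1 : ℝ) else 0)
        - ((PX.prod PY) {p | θ p.1 < θ p.2}).toReal|}
      ≤ ENNReal.ofReal ((((k : ℝ) - m)⁻¹ + ((T : ℝ) - m - k)⁻¹) / a ^ 2) := by
  set s : Set (E × E) := {p | θ p.1 < θ p.2}
  have hs : MeasurableSet s :=
    measurableSet_lt (hθ.comp measurable_fst) (hθ.comp measurable_snd)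
  set q := ((PX.prod PY) s).toReal
  set h : E × E → ℝ := fun x => s.indicator 1 x - q
  have hh : Measurable h := (measurable_const.indicator hs).sub measurable_const
  have hind_eq : ∀ x : E × E, s.indicator (1 : E × E → ℝ) x =
      if θ x.1 < θ x.2 then 1 else 0 := fun x => by simp [Set.indicator_apply, s]
  have hind_int : Integrable (s.indicator (1 : E × E → ℝ)) (PX.prod PY) :=
    (integrable_const 1).indicator hs
  have hq : q ∈ Set.Icc (0 : ℝ) 1 := ⟨ENNReal.toReal_nonneg, by simp [q, ← measureReal_def]⟩
  have hbd : ∀ x, |h x| ≤ 1 := fun x => by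
    simp only [h, hind_eq, abs_le]; constructor <;> split_ifs <;> linarith [hq.1, hq.2]
  have hcent : ∀ i ∈ Ioc m k, ∀ j ∈ Ioc k (T - m), ∫ ω, h (Z i ω, Z j ω) ∂μ = 0 := by
    intro i hi j hj
    rw [mem_Ioc] at hi hj
    rw [← integral_map (f := h) ((hZ i).prodMk (hZ j)).aemeasurable hh.aestronglyMeasurable,
      map_pair_eq_prod hZ hind hlawX hlawY (by omega) hi.2 hj.1 (by omega),
      integral_sub hind_int (integrable_const q),
      integral_indicator_one hs, integral_const]
    simp [q, measureReal_def]
  have hAB : Disjoint (Ioc m k) (Ioc k (T - m)) :=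
    disjoint_left.2 fun x hx hx' => by rw [mem_Ioc] at hx hx'; omega
  have hcardA : (#(Ioc m k) : ℝ) = k - m := by
    rw [Nat.card_Ioc, Nat.cast_sub hmk.le]
  have hcardB : (#(Ioc k (T - m)) : ℝ) = T - m - k := by
    rw [Nat.card_Ioc, Nat.cast_sub hkT.le, Nat.cast_sub (by omega)]
  have hmean : ∀ ω, (((k : ℝ) - m) * ((T : ℝ) - m - k))⁻¹ *
      ∑ i ∈ Ioc m k, ∑ j ∈ Ioc k (T - m), (if θ (Z i ω) < θ (Z j ω) then (1 : ℝ) else 0) - q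
      = ((#(Ioc m k) : ℝ) * #(Ioc k (T - m)))⁻¹ *
        ∑ i ∈ Ioc m k, ∑ j ∈ Ioc k (T - m), h (Z i ω, Z j ω) := fun ω => by
    have hk : (k : ℝ) - m ≠ 0 := by
      rw [← hcardA]; exact_mod_cast (card_pos.2 ⟨k, by simp [hmk]⟩).ne'
    have hT : (T : ℝ) - m - k ≠ 0 := by
      rw [← hcardB]; exact_mod_cast (card_pos.2 ⟨k + 1, by simp; omega⟩).ne'
    simp only [h, hind_eq, sum_sub_distrib, sum_const, nsmul_eq_mul, hcardA, hcardB]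
    field_simp
  simp_rw [hmean, ← hcardA, ← hcardB]
  exact measure_le_abs_mean_kernel_le (S := Set.Icc 1 T) hZ hind hh hbd
    (fun i hi => by simp at hi ⊢; omega) (fun j hj => by simp at hj ⊢; omega) hAB hcent ha

lemma measure_sqrt_mul_auc_sub_half_le (hθ : Measurable θ) (hZ : ∀ t, Measurable (Z t))
    (hind : iIndepFun (fun t : Set.Icc 1 T => Z t) μ)
    (hlawX : ∀ t, 1 ≤ t → t ≤ k → μ.map (Z t) = PX)
    (hlawY : ∀ t, k < t → t ≤ T → μ.map (Z t) = PY)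
    (hmk : m < k) (hkT : k < T - m) {c M : ℝ}
    (hc : 1 / 2 + c ≤ ((PX.prod PY) {p | θ p.1 < θ p.2}).toReal)
    (hD : 0 < √T * c - M) {Ψ : Ω → ℝ}
    (hΨ : ∀ ω, Ψ ω = (((k : ℝ) - m) * ((T : ℝ) - m - k))⁻¹ *
        ∑ i ∈ Ioc m k, ∑ j ∈ Ioc k (T - m), (if θ (Z i ω) < θ (Z j ω) then (1 : ℝ) else 0)) :
    μ {ω | √T * (Ψ ω - 1 / 2) ≤ M}
      ≤ ENNReal.ofReal (T * (((k : ℝ) - m)⁻¹ + ((T : ℝ) - m - k)⁻¹) / (√T * c - M) ^ 2) := by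
  have hT : 0 < √T := Real.sqrt_pos.2 (by exact_mod_cast (by omega : 0 < T))
  set a := (√T * c - M) / √T
  set q := ((PX.prod PY) {p | θ p.1 < θ p.2}).toReal
  have hsub : {ω | √T * (Ψ ω - 1 / 2) ≤ M} ⊆ {ω | a ≤ |Ψ ω - q|} := fun ω hω => by
    have : √T * a ≤ √T * (q - Ψ ω) := by
      rw [mul_div_cancel₀ _ hT.ne']; nlinarith [Set.mem_ofPred_eq ▸ hω]
    exact (le_of_mul_le_mul_left this hT).trans ((neg_le_abs _).trans_eq' (by ring))
  have hcheb := measure_le_abs_auc_sub_le hθ hZ hind hlawX hlawY hmk hkT (div_pos hD hT)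
  simp only [← hΨ] at hcheb
  have ha_sq : a ^ 2 = (√T * c - M) ^ 2 / T := by
    rw [div_pow, Real.sq_sqrt (Nat.cast_nonneg T)]
  refine (measure_mono hsub).trans (hcheb.trans_eq ?_)
  rw [ha_sq, div_div_eq_mul_div, mul_comm]

end AUC

lemma change_point_segments_bound {ε η τ : ℝ}
    (hτ : τ ∈ Set.Icc (ε + η) (1 - ε - η)) {T m k : ℕ} (hT : 2 ≤ η * T)
    (hm : (m : ℝ) ≤ T * ε) (hk : τ * T - 1 < k) (hk' : (k : ℝ) ≤ τ * T) :
    m < k ∧ k < T - m ∧ T * (((k : ℝ) - m)⁻¹ + ((T : ℝ) - m - k)⁻¹) ≤ 4 / η := by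
  have hTpos : (0 : ℝ) < T :=
    (Nat.cast_nonneg T).lt_of_ne fun h => by rw [← h, mul_zero] at hT; linarith
  have hη : 0 < η := pos_of_mul_pos_left (by linarith) hTpos.le
  have h1 : η * T / 2 ≤ (k : ℝ) - m := by nlinarith [hτ.1]
  have h2 : η * T / 2 ≤ (T : ℝ) - m - k := by nlinarith [hτ.2]
  have hhalf : 0 < η * T / 2 := by positivity
  refine ⟨by exact_mod_cast (by linarith : (m : ℝ) < k), ?_, ?_⟩
  · have : k + m < T := by exact_mod_cast (by linarith : (k : ℝ) + m < T)
    omega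
  · calc (T : ℝ) * (((k : ℝ) - m)⁻¹ + ((T : ℝ) - m - k)⁻¹)
        ≤ T * ((η * T / 2)⁻¹ + (η * T / 2)⁻¹) := by gcongr
      _ = 4 / η := by field_simp; ring

lemma tendsto_measure_one_of_tendsto_measure_compl {α : Type*} {l : Filter α}
    {Ω : α → Type*} [∀ a, MeasurableSpace (Ω a)] {μ : ∀ a, Measure (Ω a)}
    (hμ : ∀ a, IsProbabilityMeasure (μ a)) {s : ∀ a, Set (Ω a)}
    (h : Tendsto (fun a => μ a (s a)ᶜ) l (nhds 0)) :
    Tendsto (fun a => μ a (s a)) l (nhds 1) := by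
  have hlow : Tendsto (fun a => 1 - μ a (s a)ᶜ) l (nhds 1) := by
    simpa using ENNReal.Tendsto.sub tendsto_const_nhds h (Or.inl ENNReal.one_ne_top)
  refine tendsto_of_tendsto_of_tendsto_of_le_of_le hlow tendsto_const_nhds (fun a => ?_)
    (fun a => prob_le_one)
  rw [tsub_le_iff_right, ← measure_univ (μ := μ a)]
  exact measure_univ_le_add_compl _

theorem statement14_general {E : Type*} [MeasurableSpace E]
    (ε η τ : ℝ) (hε : ε ∈ Set.Ioo (0 : ℝ) (1 / 2))
    (hη : η ∈ Set.Ioo (0 : ℝ) (1 / 2 - ε))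
    (hτ : τ ∈ Set.Icc (ε + η) (1 - ε - η))
    (PX PY : ℕ → Measure E)
    (hPX : ∀ T, IsProbabilityMeasure (PX T)) (hPY : ∀ T, IsProbabilityMeasure (PY T))
    (θ : ℕ → E → ℝ) (hθmeas : ∀ T, Measurable (θ T))
    (t0 m : ℕ → ℕ) (ht0 : ∀ T, t0 T = ⌊τ * T⌋₊) (hm : ∀ T, m T = ⌊(T : ℝ) * ε⌋₊)
    (Icp : ℕ → Set ℕ)
    (hIcp : ∀ T, Icp T =
      {k : ℕ | ∃ r ∈ Set.Icc (ε + η) (1 - ε - η), k = ⌊(T : ℝ) * r⌋₊})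
    (Ω : ℕ → Type*) [mΩ : ∀ T, MeasurableSpace (Ω T)]
    (μ : (T : ℕ) → Measure (Ω T)) (hμ : ∀ T, IsProbabilityMeasure (μ T))
    (Z : (T : ℕ) → ℕ → Ω T → E) (hZmeas : ∀ T t, Measurable (Z T t))
    (hindep : ∀ T : ℕ,
      iIndepFun (fun t : Set.Icc 1 T => Z T t.1) (μ T))
    (hlawX : ∀ T t, 1 ≤ t → t ≤ t0 T → Measure.map (Z T t) (μ T) = PX T)
    (hlawY : ∀ T t, t0 T < t → t ≤ T → Measure.map (Z T t) (μ T) = PY T)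
    (Ψ : (T : ℕ) → ℕ → Ω T → ℝ)
    (hΨ : ∀ T k ω, Ψ T k ω =
      (((k : ℝ) - (m T : ℝ)) * ((T : ℝ) - (m T : ℝ) - (k : ℝ)))⁻¹ *
        ∑ i ∈ Finset.Ioc (m T) k, ∑ j ∈ Finset.Ioc k (T - m T),
          (if θ T (Z T i ω) < θ T (Z T j ω) then (1 : ℝ) else 0))
    (δ μT μstar : ℕ → ℝ)
    (hμT : ∀ T, μT T = 1 / 2 + δ T / 4)
    (hμstar : ∀ T, μstar T =
      (((PX T).prod (PY T)) {p : E × E | θ T p.1 < θ T p.2}).toReal)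
    (c : ℕ → ℝ)
    (hcinf : Tendsto (fun T : ℕ => Real.sqrt T * c T) atTop atTop)
    (hcbound : ∀ᶠ T in atTop,
      c T < δ T / 4 ∧ |μstar T - μT T| ≤ δ T / 4 - c T) :
    ∀ M : ℝ,
      Tendsto (fun T : ℕ =>
          μ T {ω | ∃ k ∈ Icp T, M < Real.sqrt T * (Ψ T k ω - 1 / 2)})
        atTop (nhds (1 : ENNReal)) := by
  intro M
  have hD : Tendsto (fun T : ℕ => √T * c T - M) atTop atTop :=
    tendsto_atTop_add_const_right _ (-M) hcinf
  have hηT : ∀ᶠ T : ℕ in atTop, 2 ≤ η * T :=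
    (tendsto_natCast_atTop_atTop.const_mul_atTop hη.1).eventually_ge_atTop 2
  have hbad : ∀ᶠ T in atTop, μ T {ω | √T * (Ψ T (t0 T) ω - 1 / 2) ≤ M}
      ≤ ENNReal.ofReal (4 / η / (√T * c T - M) ^ 2) := by
    filter_upwards [hD.eventually_gt_atTop 0, hηT, hcbound] with T hDT hT ⟨_, hμstar_near⟩
    have := hμ T; have := hPX T; have := hPY T
    obtain ⟨hmk, hkT, hgaps⟩ := change_point_segments_bound hτ hT
      (hm T ▸ Nat.floor_le (by positivity [hε.1.le])) (ht0 T ▸ Nat.sub_one_lt_floor _)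
      (ht0 T ▸ Nat.floor_le (by nlinarith [hε.1, hη.1, hτ.1]))
    have hμstar_ge : 1 / 2 + c T ≤ μstar T := by
      linarith [(abs_le.1 hμstar_near).1, hμT T]
    exact (measure_sqrt_mul_auc_sub_half_le (hθmeas T) (hZmeas T) (hindep T) (hlawX T)
      (hlawY T) hmk hkT (hμstar T ▸ hμstar_ge) hDT (hΨ T _)).trans
      (ENNReal.ofReal_le_ofReal (div_le_div_of_nonneg_right hgaps (sq_nonneg _)))
  have hlim :
      Tendsto (fun T : ℕ => ENNReal.ofReal (4 / η / (√T * c T - M) ^ 2)) atTop (nhds 0) := by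
    simpa using ENNReal.tendsto_ofReal
      (tendsto_const_nhds.div_atTop (hD.atTop_mul_atTop₀ hD |>.congr fun T => (sq _).symm))
  have ht0_mem : ∀ T, t0 T ∈ Icp T := fun T => by
    rw [hIcp]; exact ⟨τ, hτ, by rw [ht0, mul_comm]⟩
  refine tendsto_measure_one_of_tendsto_measure_compl hμ
    (tendsto_of_tendsto_of_tendsto_of_le_of_le' tendsto_const_nhds hlim
      (Eventually.of_forall fun _ => zero_le) ?_)
  filter_upwards [hbad] with T hT
  refine (measure_mono fun ω hω => ?_).trans hT
  exact not_lt.1 fun h => hω ⟨t0 T, ht0_mem T, h⟩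

/-- Theorem: consistency under the fixed alternative.
For each `T`, data `Z_1, …, Z_T` are independent with `Z_t ~ P_{X,T}` for
`t ≤ t_0 = ⌊τT⌋` and `Z_t ~ P_{Y,T}` afterwards; `Ψ̂(k)` is the AUC statistic of
the classifier score `θ̂_T`; `δ_T := E|L_T(Z) − L_T(Z')|`, `μ_T := 1/2 + δ_T/4`,
`μ_{*,T} := P(θ̂_T(Z_X) < θ̂_T(Z_Y))`.  If there are `c_T > 0` with
`√T·c_T → ∞`, `c_T < δ_T/4` and `|μ_{*,T} − μ_T| ≤ δ_T/4 − c_T` for large `T`,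
and `√T·δ_T → ∞`, then `sup_{k ∈ I_cp} √T·(Ψ̂(k) − 1/2) → ∞` in probability. -/
theorem statement14 {E : Type*} [MeasurableSpace E]
    (ε η τ : ℝ) (hε : ε ∈ Set.Ioo (0 : ℝ) (1 / 2))
    (hη : η ∈ Set.Ioo (0 : ℝ) (1 / 2 - ε))
    (hτ : τ ∈ Set.Icc (ε + η) (1 - ε - η))
    (PX PY : ℕ → Measure E)
    (hPX : ∀ T, IsProbabilityMeasure (PX T)) (hPY : ∀ T, IsProbabilityMeasure (PY T))
    (hac : ∀ T, PY T ≪ PX T)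
    (L : ℕ → E → ℝ) (hLdef : ∀ T, L T = fun z => ((PY T).rnDeriv (PX T) z).toReal)
    (θ : ℕ → E → ℝ) (hθmeas : ∀ T, Measurable (θ T))
    (hatomX : ∀ T (c : ℝ), PX T {z | θ T z = c} = 0)
    (hatomY : ∀ T (c : ℝ), PY T {z | θ T z = c} = 0)
    (t0 m : ℕ → ℕ) (ht0 : ∀ T, t0 T = ⌊τ * T⌋₊) (hm : ∀ T, m T = ⌊(T : ℝ) * ε⌋₊)
    (Icp : ℕ → Set ℕ)
    (hIcp : ∀ T, Icp T =
      {k : ℕ | ∃ r ∈ Set.Icc (ε + η) (1 - ε - η), k = ⌊(T : ℝ) * r⌋₊})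
    (Ω : ℕ → Type*) [mΩ : ∀ T, MeasurableSpace (Ω T)]
    (μ : (T : ℕ) → Measure (Ω T)) (hμ : ∀ T, IsProbabilityMeasure (μ T))
    (Z : (T : ℕ) → ℕ → Ω T → E) (hZmeas : ∀ T t, Measurable (Z T t))
    (hindep : ∀ T : ℕ,
      iIndepFun (fun t : Set.Icc 1 T => Z T t.1) (μ T))
    (hlawX : ∀ T t, 1 ≤ t → t ≤ t0 T → Measure.map (Z T t) (μ T) = PX T)
    (hlawY : ∀ T t, t0 T < t → t ≤ T → Measure.map (Z T t) (μ T) = PY T)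
    (Ψ : (T : ℕ) → ℕ → Ω T → ℝ)
    (hΨ : ∀ T k ω, Ψ T k ω =
      (((k : ℝ) - (m T : ℝ)) * ((T : ℝ) - (m T : ℝ) - (k : ℝ)))⁻¹ *
        ∑ i ∈ Finset.Ioc (m T) k, ∑ j ∈ Finset.Ioc k (T - m T),
          (if θ T (Z T i ω) < θ T (Z T j ω) then (1 : ℝ) else 0))
    (δ μT μstar : ℕ → ℝ)
    (hδ : ∀ T, δ T = ∫ p, |L T p.1 - L T p.2| ∂((PX T).prod (PX T)))
    (hμT : ∀ T, μT T = 1 / 2 + δ T / 4)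
    (hμstar : ∀ T, μstar T =
      (((PX T).prod (PY T)) {p : E × E | θ T p.1 < θ T p.2}).toReal)
    (c : ℕ → ℝ) (hcpos : ∀ T, 0 < c T)
    (hcinf : Tendsto (fun T : ℕ => Real.sqrt T * c T) atTop atTop)
    (hcbound : ∀ᶠ T in atTop,
      c T < δ T / 4 ∧ |μstar T - μT T| ≤ δ T / 4 - c T)
    (hδinf : Tendsto (fun T : ℕ => Real.sqrt T * δ T) atTop atTop) :
    ∀ M : ℝ,
      Tendsto (fun T : ℕ =>
          μ T {ω | ∃ k ∈ Icp T, M < Real.sqrt T * (Ψ T k ω - 1 / 2)})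
        atTop (nhds (1 : ENNReal)) :=
  statement14_general ε η τ hε hη hτ PX PY hPX hPY θ hθmeas t0 m ht0 hm Icp hIcp Ω (mΩ := mΩ) μ hμ Z
    hZmeas hindep hlawX hlawY Ψ hΨ δ μT μstar hμT hμstar c hcinf hcbound
end
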